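/- arXiv:2505.05014 — 6 statements merged into one kernel-verified Lean document; each statement's English description precedes it below -/
import Mathlib

section
/- Let n ≥ 3 be odd and let B ∈ [−1,1]^{n×n} be skew-symmetric with rank(B) = n−1, admitting a vector y ≠ 0 with yᵀB = 0ᵀ and Σᵢ yᵢ ≠ 0. Let x ∈ S_n satisfy xᵀB = 0ᵀ and suppose x ∈ S_n⁺⁺. If ε ≥ 0 satisfies ε < x_min / φ(B), where x_min = minᵢ xᵢ, then P_B(ε) ⊆ S_n⁺⁺. -/
/-
Write `A_j` for `B` with its `j`-th column replaced by `1`. Skew-symmetry turns `xᵀB = 0` into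
`Bx = 0`, so `ker B = ℝx` by the rank condition; since moreover `xᵀA_j = e_jᵀ` and `x_j > 0`, every
`A_j` is invertible. Fix `i` and put `u = e_i - x_i 1`, so that `xᵀu = 0`. The solutions of `By = u`
form the line `y₀ + ℝx`; for `j` minimising `y₀_j / x_j`, its point `y = y₀ - (y₀_j / x_j) x` is
`≥ 0` with `y_j = 0`, hence `y = A_j⁻¹u` and `∑ y = (1ᵀA_j⁻¹ - x)_i ≤ φ(B)`. For `z ∈ P_B(ε)` this
gives `z_i - x_i = zᵀBy ≥ -ε ∑ y ≥ -ε φ(B) > -x_min`.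
-/

open Matrix

/-- The ε-Nash polytope `P_A(ε) = {x ∈ S_n : xᵀA ≥ −ε·1ᵀ componentwise}`. -/
def nashPolytope {n : ℕ} (A : Matrix (Fin n) (Fin n) ℝ) (ε : ℝ) : Set (Fin n → ℝ) :=
  {x | (∑ i, x i = 1) ∧ ∀ j, -ε ≤ (x ᵥ* A) j}

/-- `φ(A) = max_{j∈[n]} max_{i∈[n]} |(1ᵀA_j⁻¹ − πᵀ)_i|`, where `A_j` is `A` with its
`j`-th column replaced by the all-ones vector and `π` is the unique element of `S_n`
with `πᵀA = 0ᵀ` (passed explicitly). -/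
noncomputable def phi {n : ℕ} (A : Matrix (Fin n) (Fin n) ℝ) (π : Fin n → ℝ) : ℝ :=
  ⨆ j : Fin n, ⨆ i : Fin n, |((1 : Fin n → ℝ) ᵥ* (A.updateCol j 1)⁻¹ - π) i|

namespace Matrix

theorem updateCol_mulVec_of_apply_eq_zero {m n α : Type*} [Fintype n] [DecidableEq n]
    [NonUnitalNonAssocSemiring α] (A : Matrix m n α) {j : n} (v : m → α) {c : n → α}
    (hc : c j = 0) : A.updateCol j v *ᵥ c = A *ᵥ c := by
  ext i
  simp only [mulVec, dotProduct, updateCol_apply]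
  refine Finset.sum_congr rfl fun k _ => ?_
  split_ifs with h <;> simp [h, hc]

section Algebra

variable {ι K : Type*} [Fintype ι] [Field K]

theorem ker_mulVecLin_eq_span_singleton {B : Matrix ι ι K} {x : ι → K}
    (hrank : B.rank = Fintype.card ι - 1) (hBx : B *ᵥ x = 0) (hx : x ≠ 0) :
    LinearMap.ker B.mulVecLin = K ∙ x := by
  refine (Submodule.eq_of_le_of_finrank_le
    ((Submodule.span_singleton_le_iff_mem _ _).mpr hBx) ?_).symm
  have := LinearMap.finrank_range_add_finrank_ker B.mulVecLin
  rw [finrank_span_singleton hx]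
  rw [rank] at hrank
  simp only [Module.finrank_fintype_fun_eq_card] at this
  omega

variable [DecidableEq ι]

theorem inv_mulVec_eq_of_mulVec_eq {A : Matrix ι ι K} (hA : IsUnit A.det) {y u : ι → K}
    (h : A *ᵥ y = u) : A⁻¹ *ᵥ u = y := by
  rw [← h, mulVec_mulVec, nonsing_inv_mul _ hA, one_mulVec]

theorem dotProduct_single_sub_smul_one (v : ι → K) (i : ι) (a : K) :
    v ⬝ᵥ (Pi.single i 1 - a • 1) = v i - a * ∑ k, v k := by
  rw [dotProduct_sub, dotProduct_single, dotProduct_smul, dotProduct_one, mul_one, smul_eq_mul]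

variable {B : Matrix ι ι K} {x : ι → K}

theorem vecMul_updateCol_one (hxB : x ᵥ* B = 0) (hx1 : ∑ i, x i = 1) (j : ι) :
    x ᵥ* B.updateCol j 1 = Pi.single j 1 := by
  rw [vecMul_updateCol, hxB, dotProduct_one, hx1]
  rfl

theorem isUnit_det_updateCol_one (hker : LinearMap.ker B.mulVecLin = K ∙ x)
    (hxB : x ᵥ* B = 0) (hx1 : ∑ i, x i = 1) {j : ι} (hxj : x j ≠ 0) :
    IsUnit (B.updateCol j 1).det := by
  rw [isUnit_iff_ne_zero, Ne, ← exists_mulVec_eq_zero_iff]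
  rintro ⟨c, hc0, hc⟩
  have hcj : c j = 0 := by
    rw [← one_mul (c j), ← single_dotProduct, ← vecMul_updateCol_one hxB hx1 j,
      ← dotProduct_mulVec, hc, dotProduct_zero]
  have hBc : c ∈ LinearMap.ker B.mulVecLin := by
    rw [LinearMap.mem_ker, mulVecLin_apply, ← updateCol_mulVec_of_apply_eq_zero B 1 hcj, hc]
  obtain ⟨α, rfl⟩ := Submodule.mem_span_singleton.mp (hker ▸ hBc)
  have hα : α = 0 := by simpa [hxj] using hcj
  exact hc0 (by rw [hα, zero_smul])

variable {j : ι} (hdet : IsUnit (B.updateCol j 1).det)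
include hdet

theorem updateCol_one_inv_mulVec_eq {y u : ι → K} (hyj : y j = 0) (hBy : B *ᵥ y = u) :
    (B.updateCol j 1)⁻¹ *ᵥ u = y :=
  inv_mulVec_eq_of_mulVec_eq hdet (by rw [updateCol_mulVec_of_apply_eq_zero B 1 hyj, hBy])

theorem updateCol_one_inv_mulVec_apply_self (hxB : x ᵥ* B = 0) (hx1 : ∑ i, x i = 1)
    {u : ι → K} (hxu : x ⬝ᵥ u = 0) : ((B.updateCol j 1)⁻¹ *ᵥ u) j = 0 := by
  have hrow : Pi.single j 1 ᵥ* (B.updateCol j 1)⁻¹ = x := by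
    rw [← vecMul_updateCol_one hxB hx1 j, vecMul_vecMul, mul_nonsing_inv _ hdet, vecMul_one]
  rw [← one_mul (((B.updateCol j 1)⁻¹ *ᵥ u) j), ← single_dotProduct, dotProduct_mulVec, hrow,
    hxu]

theorem mulVec_updateCol_one_inv_mulVec (hxB : x ᵥ* B = 0) (hx1 : ∑ i, x i = 1)
    {u : ι → K} (hxu : x ⬝ᵥ u = 0) : B *ᵥ ((B.updateCol j 1)⁻¹ *ᵥ u) = u := by
  rw [← updateCol_mulVec_of_apply_eq_zero B 1
    (updateCol_one_inv_mulVec_apply_self hdet hxB hx1 hxu), mulVec_mulVec,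
    mul_nonsing_inv _ hdet, one_mulVec]

theorem updateCol_one_inv_mulVec_one : (B.updateCol j 1)⁻¹ *ᵥ 1 = Pi.single j 1 := by
  refine inv_mulVec_eq_of_mulVec_eq hdet ?_
  ext m
  rw [mulVec_single_one, col_apply, updateCol_self]

theorem sum_updateCol_one_inv_mulVec (x : ι → K) (i : ι) :
    ∑ k, ((B.updateCol j 1)⁻¹ *ᵥ (Pi.single i 1 - x i • 1)) k
      = ((1 : ι → K) ᵥ* (B.updateCol j 1)⁻¹ - x) i := by
  have hsum : ∑ k, ((1 : ι → K) ᵥ* (B.updateCol j 1)⁻¹) k = 1 := by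
    rw [← dotProduct_one, ← dotProduct_mulVec, updateCol_one_inv_mulVec_one hdet, dotProduct_single,
      Pi.one_apply, mul_one]
  rw [← one_dotProduct, dotProduct_mulVec, dotProduct_single_sub_smul_one, hsum, mul_one,
    Pi.sub_apply]

end Algebra

section Order

variable {ι K : Type*} [Fintype ι] [DecidableEq ι] [Field K] [LinearOrder K]
  [IsStrictOrderedRing K] {B : Matrix ι ι K} {x : ι → K}

theorem exists_nonneg_updateCol_one_inv_mulVec (hker : LinearMap.ker B.mulVecLin = K ∙ x)
    (hxB : x ᵥ* B = 0) (hx1 : ∑ i, x i = 1) (hxpos : ∀ i, 0 < x i) {u : ι → K}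
    (hxu : x ⬝ᵥ u = 0) : ∃ j, ∀ k, 0 ≤ ((B.updateCol j 1)⁻¹ *ᵥ u) k := by
  have hdet : ∀ j, IsUnit (B.updateCol j 1).det :=
    fun j => isUnit_det_updateCol_one hker hxB hx1 (hxpos j).ne'
  have hBx : B *ᵥ x = 0 := LinearMap.mem_ker.mp (hker ▸ Submodule.mem_span_singleton_self x)
  obtain ⟨j₀⟩ : Nonempty ι := by
    by_contra h
    simp [not_nonempty_iff.mp h] at hx1
  have : Nonempty ι := ⟨j₀⟩
  set y₀ := (B.updateCol j₀ 1)⁻¹ *ᵥ u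
  have hBy₀ : B *ᵥ y₀ = u := mulVec_updateCol_one_inv_mulVec (hdet j₀) hxB hx1 hxu
  obtain ⟨j, hj⟩ := Finite.exists_min fun k => y₀ k / x k
  refine ⟨j, fun k => ?_⟩
  rw [updateCol_one_inv_mulVec_eq (y := y₀ - (y₀ j / x j) • x) (hdet j)]
  · have := (le_div_iff₀ (hxpos k)).mp (hj k)
    simp only [Pi.sub_apply, Pi.smul_apply, smul_eq_mul]
    linarith
  · simp [div_mul_cancel₀ _ (hxpos j).ne']
  · rw [mulVec_sub, mulVec_smul, hBx, smul_zero, sub_zero, hBy₀]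

theorem sub_le_apply_of_forall_neg_le_vecMul (hker : LinearMap.ker B.mulVecLin = K ∙ x)
    (hxB : x ᵥ* B = 0) (hx1 : ∑ i, x i = 1) (hxpos : ∀ i, 0 < x i) {ε : K}
    {z : ι → K} (hz1 : ∑ i, z i = 1) (hzB : ∀ k, -ε ≤ (z ᵥ* B) k) (i : ι) :
    ∃ j, x i - ε * ((1 : ι → K) ᵥ* (B.updateCol j 1)⁻¹ - x) i ≤ z i := by
  set u : ι → K := Pi.single i 1 - x i • 1
  have hxu : x ⬝ᵥ u = 0 := by rw [dotProduct_single_sub_smul_one, hx1, mul_one, sub_self]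
  obtain ⟨j, hy⟩ := exists_nonneg_updateCol_one_inv_mulVec hker hxB hx1 hxpos hxu
  have hdet := isUnit_det_updateCol_one hker hxB hx1 (hxpos j).ne'
  set y := (B.updateCol j 1)⁻¹ *ᵥ u
  refine ⟨j, ?_⟩
  calc x i - ε * ((1 : ι → K) ᵥ* (B.updateCol j 1)⁻¹ - x) i
      = x i + ∑ k, -ε * y k := by
        rw [← sum_updateCol_one_inv_mulVec hdet, ← Finset.mul_sum]
        ring
    _ ≤ x i + (z ᵥ* B) ⬝ᵥ y :=
        add_le_add_right (Finset.sum_le_sum fun k _ => mul_le_mul_of_nonneg_right (hzB k) (hy k)) _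
    _ = z i := by
        rw [← dotProduct_mulVec, mulVec_updateCol_one_inv_mulVec hdet hxB hx1 hxu,
          dotProduct_single_sub_smul_one, hz1, mul_one, add_sub_cancel]

end Order

end Matrix

theorem abs_le_phi {n : ℕ} (A : Matrix (Fin n) (Fin n) ℝ) (π : Fin n → ℝ) (j i : Fin n) :
    |((1 : Fin n → ℝ) ᵥ* (A.updateCol j 1)⁻¹ - π) i| ≤ phi A π :=
  le_ciSup_of_le (Finite.bddAbove_range _) j
    (le_ciSup (f := fun i => |((1 : Fin n → ℝ) ᵥ* (A.updateCol j 1)⁻¹ - π) i|)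
      (Finite.bddAbove_range _) i)

theorem phi_nonneg {n : ℕ} (A : Matrix (Fin n) (Fin n) ℝ) (π : Fin n → ℝ) : 0 ≤ phi A π :=
  Real.iSup_nonneg fun _ => Real.iSup_nonneg fun _ => abs_nonneg _

theorem stmt6_general (n : ℕ)
    (B : Matrix (Fin n) (Fin n) ℝ)
    (hskew : Bᵀ = -B)
    (hrank : B.rank = n - 1)
    (x : Fin n → ℝ) (hx1 : ∑ i, x i = 1) (hxB : x ᵥ* B = 0)
    (hxpos : ∀ i, 0 < x i)
    (ε : ℝ) (hε0 : 0 ≤ ε) (hε : ε < (⨅ i, x i) / phi B x) :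
    nashPolytope B ε ⊆ {z : Fin n → ℝ | (∑ i, z i = 1) ∧ ∀ i, 0 < z i} := by
  rintro z ⟨hz1, hzB⟩
  refine ⟨hz1, fun i => ?_⟩
  have hBx : B *ᵥ x = 0 := by
    rw [← neg_eq_zero, ← neg_mulVec, ← hskew, mulVec_transpose, hxB]
  have hx : x ≠ 0 := fun h => by simp [h] at hx1
  have hker := ker_mulVecLin_eq_span_singleton (by rwa [Fintype.card_fin]) hBx hx
  have hφ : 0 < phi B x :=
    (phi_nonneg B x).lt_of_ne fun h => by rw [← h, div_zero] at hε; linarith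
  have hεφ : ε * phi B x < x i :=
    ((lt_div_iff₀ hφ).mp hε).trans_le (ciInf_le (Finite.bddBelow_range x) i)
  obtain ⟨j, hj⟩ := sub_le_apply_of_forall_neg_le_vecMul hker hxB hx1 hxpos hz1 hzB i
  have hφj := (le_abs_self _).trans (abs_le_phi B x j i)
  linarith [mul_le_mul_of_nonneg_left hφj hε0]

/-- Under Condition 1 for `B`, if `x ∈ S_n⁺⁺` satisfies `xᵀB = 0ᵀ` and
`0 ≤ ε < x_min / φ(B)`, then `P_B(ε) ⊆ S_n⁺⁺`. -/
theorem stmt6 (n : ℕ) (hodd : Odd n) (hn : 3 ≤ n)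
    (B : Matrix (Fin n) (Fin n) ℝ)
    (hbound : ∀ i j, B i j ∈ Set.Icc (-1 : ℝ) 1)
    (hskew : Bᵀ = -B)
    (hrank : B.rank = n - 1)
    (hker : ∃ y : Fin n → ℝ, y ≠ 0 ∧ y ᵥ* B = 0 ∧ ∑ i, y i ≠ 0)
    (x : Fin n → ℝ) (hx1 : ∑ i, x i = 1) (hxB : x ᵥ* B = 0)
    (hxpos : ∀ i, 0 < x i)
    (ε : ℝ) (hε0 : 0 ≤ ε) (hε : ε < (⨅ i, x i) / phi B x) :
    nashPolytope B ε ⊆ {z : Fin n → ℝ | (∑ i, z i = 1) ∧ ∀ i, 0 < z i} :=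
  stmt6_general n B hskew hrank x hx1 hxB hxpos ε hε0 hε
end

section
/- Let n ≥ 3 be odd and let A, Â ∈ [−1,1]^{n×n} both be skew-symmetric of rank n−1, each admitting a nonzero vector x with xᵀ times the matrix equal to 0ᵀ and Σᵢ xᵢ ≠ 0. Let π ∈ S_n satisfy πᵀA = 0ᵀ. Let 0 < α < 1/n and set ε₂ = α/φ(Â). Suppose max_{i,j} |â_ij − a_ij| < ε₂. If P_Â(ε₂) ∩ S_n^α = ∅, then π ∉ S_n^α. -/
open Matrix

/-- `S_n^α = {x ∈ S_n : x ≥ α·1 componentwise}`. -/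
def simplexAlpha (n : ℕ) (α : ℝ) : Set (Fin n → ℝ) :=
  {x | (∑ i, x i = 1) ∧ ∀ i, α ≤ x i}

/-
The stationary distribution `π` of `A` is a probability vector, so `πᵀÂ = πᵀ(Â − A)` is a convex
combination of rows of `Â − A`, whose entries are all `> −ε₂`. Hence `π ∈ P_Â(ε₂)`, and it cannot
also lie in `S_n^α`.
-/

theorem neg_le_vecMul_of_neg_le {ι κ : Type*} [Fintype ι] {x : ι → ℝ} {M : Matrix ι κ ℝ}
    {ε : ℝ} (hx0 : 0 ≤ x) (hx1 : ∑ i, x i = 1) (hM : ∀ i j, -ε ≤ M i j) (j : κ) :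
    -ε ≤ (x ᵥ* M) j :=
  calc -ε = ∑ i, x i * -ε := by rw [← Finset.sum_mul, hx1, one_mul]
    _ ≤ ∑ i, x i * M i j :=
      Finset.sum_le_sum fun i _ => mul_le_mul_of_nonneg_left (hM i j) (hx0 i)
    _ = (x ᵥ* M) j := by simp only [vecMul, dotProduct]

theorem mem_nashPolytope_of_vecMul_eq_zero {n : ℕ} {A B : Matrix (Fin n) (Fin n) ℝ}
    {ε : ℝ} {x : Fin n → ℝ} (hx0 : 0 ≤ x) (hx1 : ∑ i, x i = 1) (hA : x ᵥ* A = 0)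
    (hclose : ∀ i j, |B i j - A i j| ≤ ε) : x ∈ nashPolytope B ε := by
  refine ⟨hx1, fun j => ?_⟩
  have hB : x ᵥ* B = x ᵥ* (B - A) := by rw [vecMul_sub, hA, sub_zero]
  rw [hB]
  exact neg_le_vecMul_of_neg_le hx0 hx1 (fun i k => neg_le_of_abs_le (hclose i k)) j

theorem nonneg_of_mem_simplexAlpha {n : ℕ} {α : ℝ} {x : Fin n → ℝ} (hα : 0 ≤ α)
    (hx : x ∈ simplexAlpha n α) : 0 ≤ x :=
  fun i => hα.trans (hx.2 i)

theorem stmt8_general (n : ℕ)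
    (A Ahat : Matrix (Fin n) (Fin n) ℝ)
    (π : Fin n → ℝ) (hπ1 : ∑ i, π i = 1) (hπ : π ᵥ* A = 0)
    (α : ℝ) (hα0 : 0 < α)
    (ε₂ : ℝ)
    (hclose : ∀ i j, |Ahat i j - A i j| < ε₂)
    (hempty : nashPolytope Ahat ε₂ ∩ simplexAlpha n α = ∅) :
    π ∉ simplexAlpha n α := by
  intro hmem
  have hπnash : π ∈ nashPolytope Ahat ε₂ :=
    mem_nashPolytope_of_vecMul_eq_zero (nonneg_of_mem_simplexAlpha hα0.le hmem) hπ1 hπ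
      fun i j => (hclose i j).le
  exact (Set.eq_empty_iff_forall_notMem.mp hempty) π ⟨hπnash, hmem⟩

/-- Under Condition 1 for both `A` and `Â`, with `πᵀA = 0ᵀ`, `π ∈ S_n`,
`0 < α < 1/n` and `ε₂ = α/φ(Â)`, if `max_{i,j} |â_ij − a_ij| < ε₂` and
`P_Â(ε₂) ∩ S_n^α = ∅`, then `π ∉ S_n^α`. -/
theorem stmt8 (n : ℕ) (hodd : Odd n) (hn : 3 ≤ n)
    (A Ahat : Matrix (Fin n) (Fin n) ℝ)
    (hboundA : ∀ i j, A i j ∈ Set.Icc (-1 : ℝ) 1)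
    (hboundAhat : ∀ i j, Ahat i j ∈ Set.Icc (-1 : ℝ) 1)
    (hskewA : Aᵀ = -A) (hskewAhat : Ahatᵀ = -Ahat)
    (hrankA : A.rank = n - 1) (hrankAhat : Ahat.rank = n - 1)
    (hkerA : ∃ x : Fin n → ℝ, x ≠ 0 ∧ x ᵥ* A = 0 ∧ ∑ i, x i ≠ 0)
    (hkerAhat : ∃ x : Fin n → ℝ, x ≠ 0 ∧ x ᵥ* Ahat = 0 ∧ ∑ i, x i ≠ 0)
    (π : Fin n → ℝ) (hπ1 : ∑ i, π i = 1) (hπ : π ᵥ* A = 0)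
    (πhat : Fin n → ℝ) (hπhat1 : ∑ i, πhat i = 1) (hπhat : πhat ᵥ* Ahat = 0)
    (α : ℝ) (hα0 : 0 < α) (hα1 : α < 1 / n)
    (ε₂ : ℝ) (hε₂ : ε₂ = α / phi Ahat πhat)
    (hclose : ∀ i j, |Ahat i j - A i j| < ε₂)
    (hempty : nashPolytope Ahat ε₂ ∩ simplexAlpha n α = ∅) :
    π ∉ simplexAlpha n α :=
  stmt8_general n A Ahat π hπ1 hπ α hα0 ε₂ hclose hempty
end

section
/- Let n ≥ 5 be odd, κ > 0, and s ∈ ℝ, and let Q = Q(n,κ,s). Define x ∈ ℝⁿ by x_i = κ if i ∈ {1, n}, x_{(n+1)/2} = 2κ − s, and x_i = s for all other i. Then xᵀQ = 0ᵀ. -/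
open Matrix

/-- The matrix `Q(n,κ,s)`; indices `0,…,n−1` of `Fin n` correspond to moves `1,…,n`:
`q_ii = 0`; for `i < j`: `q_ij = −2κ+s` if `(i,j)=(1,n)` (i.e. `j−i = n−1`),
`q_ij = κ` if `1 ≤ j−i ≤ (n−1)/2`, and `q_ij = −κ` if `(n+1)/2 ≤ j−i ≤ n−2`;
and `q_ij = −q_ji` for `i > j`. -/
def Qmat (n : ℕ) (κ s : ℝ) : Matrix (Fin n) (Fin n) ℝ :=
  Matrix.of fun i j =>
    if (i : ℕ) = (j : ℕ) then 0
    else if (i : ℕ) < (j : ℕ) then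
      (if (j : ℕ) - (i : ℕ) = n - 1 then -2 * κ + s
       else if (j : ℕ) - (i : ℕ) ≤ (n - 1) / 2 then κ else -κ)
    else
      -(if (i : ℕ) - (j : ℕ) = n - 1 then -2 * κ + s
        else if (i : ℕ) - (j : ℕ) ≤ (n - 1) / 2 then κ else -κ)

/-- The vector `x` with `x_i = κ` for `i ∈ {1, n}`, `x_{(n+1)/2} = 2κ − s`, and
`x_i = s` otherwise (0-based: indices `0`, `n−1`, and `(n−1)/2`). -/
def qvec (n : ℕ) (κ s : ℝ) : Fin n → ℝ :=
  fun i => if (i : ℕ) = 0 ∨ (i : ℕ) = n - 1 then κ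
           else if (i : ℕ) = (n - 1) / 2 then 2 * κ - s else s

/-- The circulant profile: `0` at `0`, `κ` on `1,…,m`, `−κ` on `m+1,…,2m`. -/
noncomputable def cfun (m : ℕ) (κ : ℝ) (d : ℕ) : ℝ :=
  if d = 0 then 0 else if d ≤ m then κ else -κ

lemma cfun_sum (m : ℕ) (κ : ℝ) :
    ∑ d ∈ Finset.range (2 * m + 1), cfun m κ d = 0 := by
  rw [Finset.range_eq_Ico,
    ← Finset.sum_Ico_consecutive (cfun m κ) (by omega : 0 ≤ m + 1) (by omega : m + 1 ≤ 2 * m + 1)]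
  have h1 : ∑ d ∈ Finset.Ico 0 (m + 1), cfun m κ d = m * κ := by
    rw [← Finset.range_eq_Ico, Finset.sum_range_succ' (cfun m κ) m]
    have : ∀ d ∈ Finset.range m, cfun m κ (d + 1) = κ := by
      intro d hd
      simp only [Finset.mem_range] at hd
      unfold cfun
      rw [if_neg (by omega), if_pos (by omega)]
    rw [Finset.sum_congr rfl this, Finset.sum_const]
    simp [cfun]
  have h2 : ∑ d ∈ Finset.Ico (m + 1) (2 * m + 1), cfun m κ d = m * (-κ) := by
    have : ∀ d ∈ Finset.Ico (m + 1) (2 * m + 1), cfun m κ d = -κ := by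
      intro d hd
      simp only [Finset.mem_Ico] at hd
      unfold cfun
      rw [if_neg (by omega), if_neg (by omega)]
    rw [Finset.sum_congr rfl this, Finset.sum_const, Nat.card_Ico,
      show 2 * m + 1 - (m + 1) = m from by omega]
    simp
  rw [h1, h2]; ring

lemma cfun_colsum (m : ℕ) (κ : ℝ) (j : Fin (2 * m + 1)) :
    ∑ i : Fin (2 * m + 1), cfun m κ ((j - i : Fin (2 * m + 1)) : ℕ) = 0 := by
  have h := Equiv.sum_comp (Equiv.subLeft j)
      (fun k : Fin (2 * m + 1) => cfun m κ (k : ℕ))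
  simp only [Equiv.subLeft_apply] at h
  rw [h, Fin.sum_univ_eq_sum_range (fun d => cfun m κ d) (2 * m + 1)]
  exact cfun_sum m κ

/-- Pointwise decomposition of `Q` as circulant plus correction. -/
lemma Qmat_eq (m : ℕ) (hm : 2 ≤ m) (κ s : ℝ) (i j : Fin (2 * m + 1)) :
    Qmat (2 * m + 1) κ s i j = cfun m κ ((j - i : Fin (2 * m + 1)) : ℕ) +
      (if (i : ℕ) = 0 ∧ (j : ℕ) = 2 * m then s - κ
       else if (i : ℕ) = 2 * m ∧ (j : ℕ) = 0 then κ - s else 0) := by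
  have hi := i.isLt
  have hj := j.isLt
  have h2 : 2 * m + 1 - 1 = 2 * m := by omega
  have h3 : (2 * m + 1 - 1) / 2 = m := by omega
  rcases Nat.lt_trichotomy (i : ℕ) (j : ℕ) with hlt | heq | hgt
  · have hv : ((j - i : Fin (2 * m + 1)) : ℕ) = (j : ℕ) - (i : ℕ) := by
      rw [Fin.sub_def]
      simp only
      have e : 2 * m + 1 - (i : ℕ) + (j : ℕ) = (2 * m + 1) + ((j : ℕ) - (i : ℕ)) := by omega
      rw [e, Nat.add_mod_left, Nat.mod_eq_of_lt (by omega)]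
    simp only [Qmat, Matrix.of_apply, h2, h3, hv, cfun]
    split_ifs <;> first | ring1 | (exfalso; omega)
  · have hv : ((j - i : Fin (2 * m + 1)) : ℕ) = 0 := by
      rw [Fin.sub_def]
      simp only
      have e : 2 * m + 1 - (i : ℕ) + (j : ℕ) = 2 * m + 1 := by omega
      rw [e, Nat.mod_self]
    simp only [Qmat, Matrix.of_apply, h2, h3, hv, cfun]
    split_ifs <;> first | ring1 | (exfalso; omega)
  · have hv : ((j - i : Fin (2 * m + 1)) : ℕ) = 2 * m + 1 - ((i : ℕ) - (j : ℕ)) := by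
      rw [Fin.sub_def]
      simp only
      have e : 2 * m + 1 - (i : ℕ) + (j : ℕ) = 2 * m + 1 - ((i : ℕ) - (j : ℕ)) := by omega
      rw [e, Nat.mod_eq_of_lt (by omega)]
    simp only [Qmat, Matrix.of_apply, h2, h3, hv, cfun]
    split_ifs <;> first | ring1 | (exfalso; omega)

lemma Emat_colsum (m : ℕ) (hm : 2 ≤ m) (κ s : ℝ) (j : Fin (2 * m + 1)) :
    ∑ i : Fin (2 * m + 1),
      (if (i : ℕ) = 0 ∧ (j : ℕ) = 2 * m then s - κ
       else if (i : ℕ) = 2 * m ∧ (j : ℕ) = 0 then κ - s else 0)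
    = (if (j : ℕ) = 2 * m then s - κ else if (j : ℕ) = 0 then κ - s else 0) := by
  by_cases hj2 : (j : ℕ) = 2 * m
  · have hj0 : ¬ (j : ℕ) = 0 := by omega
    rw [if_pos hj2]
    have : ∀ i : Fin (2 * m + 1),
        (if (i : ℕ) = 0 ∧ (j : ℕ) = 2 * m then s - κ
         else if (i : ℕ) = 2 * m ∧ (j : ℕ) = 0 then κ - s else 0)
        = if i = (⟨0, by omega⟩ : Fin (2 * m + 1)) then s - κ else 0 := by
      intro i
      rcases eq_or_ne i (⟨0, by omega⟩ : Fin (2 * m + 1)) with h | h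
      · rw [if_pos h, if_pos ⟨by rw [h], hj2⟩]
      · rw [if_neg h, if_neg (by
          rintro ⟨h0, -⟩
          exact h (Fin.ext h0)), if_neg (by
          rintro ⟨-, h0⟩
          exact hj0 h0)]
    rw [Finset.sum_congr rfl (fun i _ => this i), Finset.sum_ite_eq' Finset.univ]
    simp
  · rw [if_neg hj2]
    by_cases hj0 : (j : ℕ) = 0
    · rw [if_pos hj0]
      have : ∀ i : Fin (2 * m + 1),
          (if (i : ℕ) = 0 ∧ (j : ℕ) = 2 * m then s - κ
           else if (i : ℕ) = 2 * m ∧ (j : ℕ) = 0 then κ - s else 0)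
          = if i = (⟨2 * m, by omega⟩ : Fin (2 * m + 1)) then κ - s else 0 := by
        intro i
        rcases eq_or_ne i (⟨2 * m, by omega⟩ : Fin (2 * m + 1)) with h | h
        · rw [if_pos h, if_neg (by rintro ⟨-, h0⟩; exact hj2 h0), if_pos ⟨by rw [h], hj0⟩]
        · rw [if_neg h, if_neg (by rintro ⟨-, h0⟩; exact hj2 h0), if_neg (by
            rintro ⟨h0, -⟩
            exact h (Fin.ext h0))]
      rw [Finset.sum_congr rfl (fun i _ => this i), Finset.sum_ite_eq' Finset.univ]
      simp
    · rw [if_neg hj0]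
      apply Finset.sum_eq_zero
      intro i _
      rw [if_neg (by rintro ⟨-, h0⟩; exact hj2 h0), if_neg (by rintro ⟨-, h0⟩; exact hj0 h0)]

/-- Column sums of `Q`. -/
lemma Qmat_colsum (m : ℕ) (hm : 2 ≤ m) (κ s : ℝ) (j : Fin (2 * m + 1)) :
    ∑ i : Fin (2 * m + 1), Qmat (2 * m + 1) κ s i j
    = (if (j : ℕ) = 2 * m then s - κ else if (j : ℕ) = 0 then κ - s else 0) := by
  rw [Finset.sum_congr rfl (fun i _ => Qmat_eq m hm κ s i j), Finset.sum_add_distrib,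
    cfun_colsum, Emat_colsum m hm κ s j, zero_add]

set_option maxHeartbeats 1600000 in
/-- `xᵀ Q(n,κ,s) = 0ᵀ` for the vector `x` above. -/
theorem stmt10 (n : ℕ) (hodd : Odd n) (hn : 5 ≤ n) (κ s : ℝ) (hκ : 0 < κ) :
    qvec n κ s ᵥ* Qmat n κ s = 0 := by
  obtain ⟨m, hm⟩ := hodd
  have hn' : n = 2 * m + 1 := by omega
  subst hn'
  have hm2 : 2 ≤ m := by omega
  have h2 : 2 * m + 1 - 1 = 2 * m := by omega
  have h3 : (2 * m + 1 - 1) / 2 = m := by omega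
  funext j
  have hj := j.isLt
  simp only [Matrix.vecMul, dotProduct, Pi.zero_apply]
  have hsplit : ∀ i : Fin (2 * m + 1),
      qvec (2 * m + 1) κ s i * Qmat (2 * m + 1) κ s i j
      = s * Qmat (2 * m + 1) κ s i j
        + (qvec (2 * m + 1) κ s i - s) * Qmat (2 * m + 1) κ s i j := by
    intro i; ring
  rw [Finset.sum_congr rfl (fun i _ => hsplit i), Finset.sum_add_distrib,
    ← Finset.mul_sum, Qmat_colsum m hm2 κ s j]
  -- second sum: restrict to the support {0, m, 2m}
  set i0 : Fin (2 * m + 1) := ⟨0, by omega⟩ with hi0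
  set i1 : Fin (2 * m + 1) := ⟨m, by omega⟩ with hi1
  set i2 : Fin (2 * m + 1) := ⟨2 * m, by omega⟩ with hi2
  have hsupp : ∀ i ∈ Finset.univ, i ∉ ({i0, i1, i2} : Finset (Fin (2 * m + 1))) →
      (qvec (2 * m + 1) κ s i - s) * Qmat (2 * m + 1) κ s i j = 0 := by
    intro i _ hi
    simp only [Finset.mem_insert, Finset.mem_singleton, not_or] at hi
    obtain ⟨e0, e1, e2⟩ := hi
    have v0 : (i : ℕ) ≠ 0 := fun h => e0 (Fin.ext (by simp [hi0, h]))
    have v1 : (i : ℕ) ≠ m := fun h => e1 (Fin.ext (by simp [hi1, h]))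
    have v2 : (i : ℕ) ≠ 2 * m := fun h => e2 (Fin.ext (by simp [hi2, h]))
    have : qvec (2 * m + 1) κ s i = s := by
      unfold qvec
      rw [if_neg (by omega), if_neg (by omega)]
    rw [this, sub_self, zero_mul]
  rw [← Finset.sum_subset (Finset.subset_univ ({i0, i1, i2} : Finset (Fin (2 * m + 1)))) hsupp]
  have hne01 : i0 ≠ i1 := by simp [hi0, hi1, Fin.ext_iff]; omega
  have hne02 : i0 ≠ i2 := by simp [hi0, hi2, Fin.ext_iff]; omega
  have hne12 : i1 ≠ i2 := by simp [hi1, hi2, Fin.ext_iff]; omega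
  rw [Finset.sum_insert (by simp [hne01, hne02]),
    Finset.sum_insert (by simp [hne12]), Finset.sum_singleton]
  -- values of qvec at the support
  have hq0 : qvec (2 * m + 1) κ s i0 = κ := by
    unfold qvec; rw [if_pos (Or.inl (by simp [hi0]))]
  have hq2 : qvec (2 * m + 1) κ s i2 = κ := by
    unfold qvec; rw [if_pos (Or.inr (by simp [hi2, h2]))]
  have hq1 : qvec (2 * m + 1) κ s i1 = 2 * κ - s := by
    unfold qvec
    rw [if_neg (by simp [hi1, h2]; omega), if_pos (by simp [hi1, h3])]
  rw [hq0, hq1, hq2]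
  have hv0 : (i0 : ℕ) = 0 := rfl
  have hv1 : (i1 : ℕ) = m := rfl
  have hv2 : (i2 : ℕ) = 2 * m := rfl
  -- now case on j
  by_cases hj0 : (j : ℕ) = 0
  · have e1 : Qmat (2 * m + 1) κ s i0 j = 0 := by
      simp only [Qmat, Matrix.of_apply, h2, h3, hv0, hj0]
      split_ifs <;> first | ring1 | (exfalso; omega)
    have e2 : Qmat (2 * m + 1) κ s i1 j = -κ := by
      simp only [Qmat, Matrix.of_apply, h2, h3, hv1, hj0]
      split_ifs <;> first | ring1 | (exfalso; omega)
    have e3 : Qmat (2 * m + 1) κ s i2 j = 2 * κ - s := by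
      simp only [Qmat, Matrix.of_apply, h2, h3, hv2, hj0]
      split_ifs <;> first | ring1 | (exfalso; omega)
    rw [e1, e2, e3, if_neg (by omega), if_pos hj0]
    ring
  · by_cases hj2 : (j : ℕ) = 2 * m
    · have e1 : Qmat (2 * m + 1) κ s i0 j = -2 * κ + s := by
        simp only [Qmat, Matrix.of_apply, h2, h3, hv0, hj2]
        split_ifs <;> first | ring1 | (exfalso; omega)
      have e2 : Qmat (2 * m + 1) κ s i1 j = κ := by
        simp only [Qmat, Matrix.of_apply, h2, h3, hv1, hj2]
        split_ifs <;> first | ring1 | (exfalso; omega)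
      have e3 : Qmat (2 * m + 1) κ s i2 j = 0 := by
        simp only [Qmat, Matrix.of_apply, h2, h3, hv2, hj2]
        split_ifs <;> first | ring1 | (exfalso; omega)
      rw [e1, e2, e3, if_pos hj2]
      ring
    · by_cases hjm : (j : ℕ) = m
      · have e1 : Qmat (2 * m + 1) κ s i0 j = κ := by
          simp only [Qmat, Matrix.of_apply, h2, h3, hv0, hjm]
          split_ifs <;> first | ring1 | (exfalso; omega)
        have e2 : Qmat (2 * m + 1) κ s i1 j = 0 := by
          simp only [Qmat, Matrix.of_apply, h2, h3, hv1, hjm]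
          split_ifs <;> first | ring1 | (exfalso; omega)
        have e3 : Qmat (2 * m + 1) κ s i2 j = -κ := by
          simp only [Qmat, Matrix.of_apply, h2, h3, hv2, hjm]
          split_ifs <;> first | ring1 | (exfalso; omega)
        rw [e1, e2, e3, if_neg hj2, if_neg hj0]
        ring
      · by_cases hjlt : (j : ℕ) < m
        · have e1 : Qmat (2 * m + 1) κ s i0 j = κ := by
            simp only [Qmat, Matrix.of_apply, h2, h3, hv0]
            split_ifs <;> first | ring1 | (exfalso; omega)
          have e2 : Qmat (2 * m + 1) κ s i1 j = -κ := by
            simp only [Qmat, Matrix.of_apply, h2, h3, hv1]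
            split_ifs <;> first | ring1 | (exfalso; omega)
          have e3 : Qmat (2 * m + 1) κ s i2 j = κ := by
            simp only [Qmat, Matrix.of_apply, h2, h3, hv2]
            split_ifs <;> first | ring1 | (exfalso; omega)
          rw [e1, e2, e3, if_neg hj2, if_neg hj0]
          ring
        · -- m < j < 2m
          have e1 : Qmat (2 * m + 1) κ s i0 j = -κ := by
            simp only [Qmat, Matrix.of_apply, h2, h3, hv0]
            split_ifs <;> first | ring1 | (exfalso; omega)
          have e2 : Qmat (2 * m + 1) κ s i1 j = κ := by
            simp only [Qmat, Matrix.of_apply, h2, h3, hv1]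
            split_ifs <;> first | ring1 | (exfalso; omega)
          have e3 : Qmat (2 * m + 1) κ s i2 j = -κ := by
            simp only [Qmat, Matrix.of_apply, h2, h3, hv2]
            split_ifs <;> first | ring1 | (exfalso; omega)
          rw [e1, e2, e3, if_neg hj2, if_neg hj0]
          ring
end

section
/- Let n ≥ 5 be odd, κ > 0, and s ∈ ℝ with s ∉ {0, 2κ}. Then the matrix Q = Q(n,κ,s) has rank(Q) = n − 1. -/
/-!
Write `n = 2m + 1`. A skew-symmetric matrix of odd size is singular, so it suffices that a
kernel vector `v` of `Q` with `v 0 = 0` vanishes. Away from row and column `0`, `Q` agrees with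
the circulant tournament matrix `C` (entry `κ` towards the `m` cyclic successors, `-κ` towards the
`m` predecessors), so `C v` vanishes outside row `0`; the columns of `C` sum to zero, hence
`C v = 0`. Subtracting consecutive rows of `C` gives `2 v (i + m + 1) = v i + v (i + 1)`, and a
maximum principle on `ℤ/(2m+1)` forces `v` to be constant, hence zero.
-/

open Matrix

open Module Fin.CommRing

theorem Matrix.det_eq_zero_of_transpose_eq_neg {ι R : Type*} [Fintype ι] [DecidableEq ι]
    [CommRing R] [NoZeroDivisors R] [CharZero R] {A : Matrix ι ι R}
    (hA : Aᵀ = -A) (hodd : Odd (Fintype.card ι)) : A.det = 0 := by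
  have h := congrArg det hA
  rw [det_transpose, det_neg, hodd.neg_one_pow, neg_one_mul] at h
  exact self_eq_neg.mp h

theorem Matrix.rank_eq_card_sub_one {ι K : Type*} [Fintype ι] [DecidableEq ι] [Field K]
    {A : Matrix ι ι K} (hdet : A.det = 0) (i₀ : ι)
    (hker : ∀ v, A *ᵥ v = 0 → v i₀ = 0 → v = 0) : A.rank = Fintype.card ι - 1 := by
  have hle : finrank K (LinearMap.ker A.mulVecLin) ≤ 1 := by
    have hinj :
        Function.Injective ((LinearMap.proj i₀).comp (LinearMap.ker A.mulVecLin).subtype) := by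
      rw [← LinearMap.ker_eq_bot, LinearMap.ker_eq_bot']
      rintro ⟨v, hv⟩ hv₀
      exact Subtype.ext (hker v hv hv₀)
    simpa using LinearMap.finrank_le_finrank_of_injective hinj
  have hpos : 0 < finrank K (LinearMap.ker A.mulVecLin) := by
    obtain ⟨v, hv, hAv⟩ := exists_mulVec_eq_zero_iff.mpr hdet
    exact finrank_pos_iff_exists_ne_zero.mpr
      ⟨⟨v, hAv⟩, fun h => hv (congrArg Subtype.val h)⟩
  have := A.mulVecLin.finrank_range_add_finrank_ker
  rw [finrank_fintype_fun_eq_card] at this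
  rw [Matrix.rank]
  omega

def cyclicWeight (m : ℕ) (κ : ℝ) (d : ℕ) : ℝ :=
  if d = 0 then 0 else if d ≤ m then κ else -κ

def cyclicTournament (m : ℕ) (κ : ℝ) : Matrix (Fin (2 * m + 1)) (Fin (2 * m + 1)) ℝ :=
  of fun i j => cyclicWeight m κ (j - i : Fin (2 * m + 1))

theorem sum_range_cyclicWeight (m : ℕ) (κ : ℝ) :
    ∑ d ∈ Finset.range (2 * m + 1), cyclicWeight m κ d = 0 := by
  rw [show 2 * m + 1 = 1 + m + m by ring, Finset.sum_range_add, Finset.sum_range_add]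
  have hsucc : ∀ x ∈ Finset.range m, cyclicWeight m κ (1 + x) = κ := fun x hx => by
    simp only [Finset.mem_range] at hx
    simp only [cyclicWeight]; split_ifs <;> first | omega | rfl
  have hpred : ∀ x ∈ Finset.range m, cyclicWeight m κ (1 + m + x) = -κ := fun x hx => by
    simp only [cyclicWeight]; split_ifs <;> first | omega | rfl
  rw [Finset.sum_congr rfl hsucc, Finset.sum_congr rfl hpred]
  simp [cyclicWeight]

theorem sum_cyclicTournament_apply (m : ℕ) (κ : ℝ) (j : Fin (2 * m + 1)) :
    ∑ i, cyclicTournament m κ i j = 0 := by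
  simp only [cyclicTournament, of_apply]
  rw [Fintype.sum_equiv (Equiv.subLeft j) (fun i => cyclicWeight m κ (j - i : Fin (2 * m + 1)))
    (fun d => cyclicWeight m κ d) (fun _ => rfl),
    Fin.sum_univ_eq_sum_range (cyclicWeight m κ), sum_range_cyclicWeight]

theorem sum_cyclicTournament_mulVec (m : ℕ) (κ : ℝ) (v : Fin (2 * m + 1) → ℝ) :
    ∑ i, (cyclicTournament m κ *ᵥ v) i = 0 := by
  simp only [mulVec, dotProduct]
  rw [Finset.sum_comm]
  simp [← Finset.sum_mul, sum_cyclicTournament_apply]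

theorem cyclicWeight_sub_one_sub (m : ℕ) (κ : ℝ) (d : Fin (2 * m + 1)) :
    cyclicWeight m κ (d - 1 : Fin (2 * m + 1)) - cyclicWeight m κ d =
      κ * (2 * (if d = ((m + 1 : ℕ) : Fin (2 * m + 1)) then 1 else 0)
        - (if d = 0 then 1 else 0) - (if d = 1 then 1 else 0)) := by
  rcases Nat.eq_zero_or_pos m with rfl | hm
  · obtain rfl : d = 0 := Fin.ext (by have := d.isLt; omega)
    norm_num
  · have hm1 : ((m + 1 : ℕ) : Fin (2 * m + 1)) = ⟨m + 1, by omega⟩ :=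
      Fin.ext (by rw [Fin.val_natCast, Nat.mod_eq_of_lt (by omega)])
    have h1 : (1 : Fin (2 * m + 1)) = ⟨1, by omega⟩ := Fin.ext (by simp; omega)
    rw [Fin.coe_sub_one, hm1, h1]
    simp only [Fin.ext_iff, Fin.val_zero, cyclicWeight]
    split_ifs <;> first | (exfalso; omega) | ring

theorem cyclicTournament_succ_sub (m : ℕ) (κ : ℝ) (i j : Fin (2 * m + 1)) :
    cyclicTournament m κ (i + 1) j - cyclicTournament m κ i j =
      κ * (2 * (if j = i + (m + 1 : ℕ) then 1 else 0)
        - (if j = i then 1 else 0) - (if j = i + 1 then 1 else 0)) := by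
  simp only [cyclicTournament, of_apply]
  rw [show j - (i + 1) = (j - i) - 1 by ring, cyclicWeight_sub_one_sub]
  simp only [sub_eq_iff_eq_add', add_zero]

theorem cyclicTournament_mulVec_succ_sub (m : ℕ) (κ : ℝ) (v : Fin (2 * m + 1) → ℝ)
    (i : Fin (2 * m + 1)) :
    (cyclicTournament m κ *ᵥ v) (i + 1) - (cyclicTournament m κ *ᵥ v) i =
      κ * (2 * v (i + (m + 1 : ℕ)) - v i - v (i + 1)) := by
  simp only [mulVec, dotProduct, ← Finset.sum_sub_distrib, ← sub_mul, cyclicTournament_succ_sub]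
  simp [mul_sub, sub_mul, Finset.sum_sub_distrib, mul_assoc]

theorem Fin.apply_eq_of_two_mul_eq_add {R : Type*} [Field R] [LinearOrder R]
    [IsStrictOrderedRing R] {m : ℕ} {v : Fin (2 * m + 1) → R}
    (h : ∀ i, 2 * v (i + (m + 1 : ℕ)) = v i + v (i + 1)) (i j : Fin (2 * m + 1)) :
    v i = v j := by
  obtain ⟨k, hk⟩ := Finite.exists_max v
  -- a maximum at `x` forces maxima at both `x - (m + 1)` and `x - m`, and `-2m = 1`
  have back : ∀ x, v x = v k → v (x - m) = v k := fun x hx => by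
    have hx' := h (x - (m + 1 : ℕ))
    rw [sub_add_cancel, hx,
      show x - ((m + 1 : ℕ) : Fin (2 * m + 1)) + 1 = x - m by push_cast; ring] at hx'
    linarith [hk (x - (m + 1 : ℕ)), hk (x - m)]
  have succ : ∀ x, v x = v k → v (x + 1) = v k := fun x hx => by
    have hn := Fin.natCast_self (2 * m + 1)
    push_cast at hn
    rw [show x + 1 = x - m - m by linear_combination hn]
    exact back _ (back x hx)
  have hall : ∀ x, v x = v k := fun x => by
    rw [← add_sub_cancel k x, ← Fin.cast_val_eq_self (x - k)]
    induction ((x - k : Fin (2 * m + 1)) : ℕ) with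
    | zero => simp
    | succ t ih => rw [Nat.cast_succ, ← add_assoc]; exact succ _ ih
  rw [hall i, hall j]

theorem apply_eq_of_cyclicTournament_mulVec_eq_zero {m : ℕ} {κ : ℝ} (hκ : κ ≠ 0)
    {v : Fin (2 * m + 1) → ℝ} (hv : cyclicTournament m κ *ᵥ v = 0) (i j : Fin (2 * m + 1)) :
    v i = v j := by
  refine Fin.apply_eq_of_two_mul_eq_add (fun i => ?_) i j
  have h := cyclicTournament_mulVec_succ_sub m κ v i
  simp only [hv, Pi.zero_apply, sub_self] at h
  linarith [(mul_eq_zero.mp h.symm).resolve_left hκ]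

theorem Qmat_transpose (n : ℕ) (κ s : ℝ) : (Qmat n κ s)ᵀ = -Qmat n κ s := by
  ext i j
  simp only [transpose_apply, Matrix.neg_apply, Qmat, of_apply]
  split_ifs <;> first | (exfalso; omega) | ring

theorem Qmat_apply_eq_cyclicTournament {m : ℕ} (κ s : ℝ) {i j : Fin (2 * m + 1)} (hi : i ≠ 0)
    (hj : j ≠ 0) : Qmat (2 * m + 1) κ s i j = cyclicTournament m κ i j := by
  rw [Ne, Fin.ext_iff, Fin.val_zero] at hi hj
  simp only [Qmat, cyclicTournament, cyclicWeight, of_apply]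
  rcases le_or_gt i j with hij | hij
  · rw [Fin.coe_sub_iff_le.mpr hij]
    split_ifs <;> first | (exfalso; omega) | ring
  · rw [Fin.coe_sub_iff_lt.mpr hij]
    split_ifs <;> first | (exfalso; omega) | ring

theorem eq_zero_of_Qmat_mulVec_eq_zero {m : ℕ} {κ s : ℝ} (hκ : κ ≠ 0)
    {v : Fin (2 * m + 1) → ℝ}
    (hv : Qmat (2 * m + 1) κ s *ᵥ v = 0) (hv₀ : v 0 = 0) : v = 0 := by
  have hrow : ∀ i ≠ 0, (cyclicTournament m κ *ᵥ v) i = 0 := fun i hi => by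
    have hQi := congrFun hv i
    simp only [mulVec, dotProduct, Pi.zero_apply] at hQi ⊢
    rw [← hQi]
    refine Finset.sum_congr rfl fun j _ => ?_
    rcases eq_or_ne j 0 with rfl | hj
    · simp [hv₀]
    · rw [Qmat_apply_eq_cyclicTournament κ s hi hj]
  have hCv : cyclicTournament m κ *ᵥ v = 0 := by
    funext i
    rcases eq_or_ne i 0 with rfl | hi
    · simpa [Finset.sum_eq_single 0 fun i _ => hrow i] using sum_cyclicTournament_mulVec m κ v
    · exact hrow i hi
  funext i
  rw [apply_eq_of_cyclicTournament_mulVec_eq_zero hκ hCv i 0, hv₀, Pi.zero_apply]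

theorem stmt11_general (n : ℕ) (hodd : Odd n) (κ s : ℝ) (hκ : 0 < κ) :
    (Qmat n κ s).rank = n - 1 := by
  obtain ⟨m, rfl⟩ := hodd
  have hdet : (Qmat (2 * m + 1) κ s).det = 0 :=
    det_eq_zero_of_transpose_eq_neg (Qmat_transpose _ κ s) (by simp)
  simpa using rank_eq_card_sub_one hdet 0 fun v hv hv₀ =>
    eq_zero_of_Qmat_mulVec_eq_zero hκ.ne' hv hv₀

/-- For odd `n ≥ 5`, `κ > 0` and `s ∉ {0, 2κ}`,
the matrix `Q(n,κ,s)` has rank `n − 1`. -/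
theorem stmt11 (n : ℕ) (hodd : Odd n) (hn : 5 ≤ n) (κ s : ℝ) (hκ : 0 < κ)
    (hs0 : s ≠ 0) (hs2 : s ≠ 2 * κ) :
    (Qmat n κ s).rank = n - 1 :=
  stmt11_general n hodd κ s hκ
end

section
/- Let n ≥ 5 be odd, κ > 0, and s ∈ ℝ, and let Q = Q(n,κ,s). If 0 < s < 2κ then Q is non-redundant, i.e., every Nash equilibrium of Q lies in S_n⁺⁺; otherwise (s ≤ 0 or s ≥ 2κ) Q is redundant, i.e., Q has a Nash equilibrium that is not in S_n⁺⁺. -/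
open Matrix

/-- `π` is a Nash equilibrium of the (skew-symmetric) pay-off matrix `A`:
`π ∈ S_n⁺` and `πᵀAy ≥ 0` for every `y ∈ S_n⁺`. -/
def IsNashEq {n : ℕ} (A : Matrix (Fin n) (Fin n) ℝ) (π : Fin n → ℝ) : Prop :=
  (∑ i, π i = 1) ∧ (∀ i, 0 ≤ π i) ∧
    ∀ y : Fin n → ℝ, (∑ i, y i = 1) → (∀ i, 0 ≤ y i) → 0 ≤ π ᵥ* A ⬝ᵥ y


set_option maxHeartbeats 3200000


section Aux
variable {n m : ℕ} {κ s : ℝ}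

lemma Qmat_skew (i j : Fin n) : Qmat n κ s j i = - Qmat n κ s i j := by
  obtain ⟨a, ha⟩ := i; obtain ⟨b, hb⟩ := j
  simp only [Qmat, Matrix.of_apply]
  split_ifs <;> first | (exfalso; omega) | ring1

lemma entry_lo (hnm : n = 2*m+1) (hm : 2 ≤ m) {a b : ℕ} (ha : a < b) (hb : b < n)
    (hd : b - a ≤ m) :
    Qmat n κ s ⟨a, lt_trans ha hb⟩ ⟨b, hb⟩ = κ := by
  simp only [Qmat, Matrix.of_apply]
  split_ifs <;> first | (exfalso; omega) | ring1

lemma entry_hi (hnm : n = 2*m+1) (hm : 2 ≤ m) {a b : ℕ} (ha : a < b) (hb : b < n)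
    (hd : m + 1 ≤ b - a) (hd2 : b - a ≤ n - 2) :
    Qmat n κ s ⟨a, lt_trans ha hb⟩ ⟨b, hb⟩ = -κ := by
  simp only [Qmat, Matrix.of_apply]
  split_ifs <;> first | (exfalso; omega) | ring1

lemma entry_0n (hnm : n = 2*m+1) (hm : 2 ≤ m) (h0 : 0 < n) (h1 : n-1 < n) :
    Qmat n κ s ⟨0, h0⟩ ⟨n-1, h1⟩ = -2*κ + s := by
  simp only [Qmat, Matrix.of_apply]
  split_ifs <;> first | (exfalso; omega) | ring1

lemma coldiff_pt (hnm : n = 2*m+1) (hm : 2 ≤ m) {j p : ℕ} (hj : j ≤ n-2) (hp : p < n)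
    (hpe : p = j+m+1 ∨ p + n = j+m+1) (i : Fin n) (hj1 : j < n) (hj2 : j+1 < n) :
    Qmat n κ s i ⟨j+1, hj2⟩ - Qmat n κ s i ⟨j, hj1⟩ =
      (if (i:ℕ) = j then κ else 0) + (if (i:ℕ) = j+1 then κ else 0)
      + (if (i:ℕ) = p then -(2*κ) else 0)
      + (if j = 0 then (if (i:ℕ) = n-1 then s-κ else 0) else 0)
      + (if j = n-2 then (if (i:ℕ) = 0 then s-κ else 0) else 0) := by
  obtain ⟨a, ha⟩ := i
  simp only [Qmat, Matrix.of_apply]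
  split_ifs <;> first | (exfalso; omega) | ring1

lemma coldiff_wrap (hnm : n = 2*m+1) (hm : 2 ≤ m) (i : Fin n) (h0 : 0 < n) (h1 : n-1 < n)
    (hmn : m < n) :
    Qmat n κ s i ⟨0, h0⟩ - Qmat n κ s i ⟨n-1, h1⟩ =
      (if (i:ℕ) = n-1 then 2*κ-s else 0) + (if (i:ℕ) = 0 then 2*κ-s else 0)
      + (if (i:ℕ) = m then -(2*κ) else 0) := by
  obtain ⟨a, ha⟩ := i
  simp only [Qmat, Matrix.of_apply]
  split_ifs <;> first | (exfalso; omega) | ring1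

/-- sum of an indicator against a function -/
lemma sum_ind {f : Fin n → ℝ} {c : ℝ} {a : ℕ} (ha : a < n) :
    (∑ i : Fin n, (if (i:ℕ) = a then c else 0) * f i) = c * f ⟨a, ha⟩ := by
  rw [Finset.sum_eq_single_of_mem (⟨a, ha⟩ : Fin n) (Finset.mem_univ _)]
  · simp
  · intro b _ hb
    rw [if_neg (fun h => hb (Fin.ext h)), zero_mul]

lemma vecMul_apply' (π : Fin n → ℝ) (j : Fin n) :
    (π ᵥ* Qmat n κ s) j = ∑ i : Fin n, π i * Qmat n κ s i j := by
  simp [Matrix.vecMul, dotProduct]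
end Aux

section Block2
variable {n m : ℕ} {κ s : ℝ}

lemma cdiff (hnm : n = 2*m+1) (hm : 2 ≤ m) (π : Fin n → ℝ) {j p : ℕ} (hj : j ≤ n-2)
    (hp : p < n) (hpe : p = j+m+1 ∨ p + n = j+m+1) (hj1 : j < n) (hj2 : j+1 < n)
    (h0 : 0 < n) (h1 : n-1 < n) :
    (π ᵥ* Qmat n κ s) ⟨j+1, hj2⟩ - (π ᵥ* Qmat n κ s) ⟨j, hj1⟩ =
      κ * π ⟨j, hj1⟩ + κ * π ⟨j+1, hj2⟩ + (-(2*κ)) * π ⟨p, hp⟩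
      + (if j = 0 then s-κ else 0) * π ⟨n-1, h1⟩
      + (if j = n-2 then s-κ else 0) * π ⟨0, h0⟩ := by
  rw [vecMul_apply', vecMul_apply', ← Finset.sum_sub_distrib]
  have hcongr : ∀ i ∈ Finset.univ, π i * Qmat n κ s i ⟨j+1, hj2⟩ - π i * Qmat n κ s i ⟨j, hj1⟩
      = (if (i:ℕ) = j then κ else 0) * π i + (if (i:ℕ) = j+1 then κ else 0) * π i
        + (if (i:ℕ) = p then (-(2*κ)) else 0) * π i
        + (if (i:ℕ) = n-1 then (if j = 0 then s-κ else 0) else 0) * π i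
        + (if (i:ℕ) = 0 then (if j = n-2 then s-κ else 0) else 0) * π i := by
    intro i _
    rw [← mul_sub, coldiff_pt hnm hm hj hp hpe i hj1 hj2]
    split_ifs <;> ring
  rw [Finset.sum_congr rfl hcongr, Finset.sum_add_distrib, Finset.sum_add_distrib,
    Finset.sum_add_distrib, Finset.sum_add_distrib, sum_ind hj1, sum_ind hj2, sum_ind hp,
    sum_ind h1, sum_ind h0]

lemma cwrap (hnm : n = 2*m+1) (hm : 2 ≤ m) (π : Fin n → ℝ) (h0 : 0 < n) (h1 : n-1 < n)
    (hmn : m < n) :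
    (π ᵥ* Qmat n κ s) ⟨0, h0⟩ - (π ᵥ* Qmat n κ s) ⟨n-1, h1⟩ =
      (2*κ-s) * π ⟨n-1, h1⟩ + (2*κ-s) * π ⟨0, h0⟩ + (-(2*κ)) * π ⟨m, hmn⟩ := by
  rw [vecMul_apply', vecMul_apply', ← Finset.sum_sub_distrib]
  have hcongr : ∀ i ∈ Finset.univ, π i * Qmat n κ s i ⟨0, h0⟩ - π i * Qmat n κ s i ⟨n-1, h1⟩
      = (if (i:ℕ) = n-1 then 2*κ-s else 0) * π i + (if (i:ℕ) = 0 then 2*κ-s else 0) * π i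
        + (if (i:ℕ) = m then (-(2*κ)) else 0) * π i := by
    intro i _
    rw [← mul_sub, coldiff_wrap hnm hm i h0 h1 hmn]
    ring
  rw [Finset.sum_congr rfl hcongr, Finset.sum_add_distrib, Finset.sum_add_distrib,
    sum_ind h1, sum_ind h0, sum_ind hmn]

lemma skew_pair (x y : Fin n → ℝ) :
    ∑ j, (x ᵥ* Qmat n κ s) j * y j = - ∑ j, (y ᵥ* Qmat n κ s) j * x j := by
  calc ∑ j, (x ᵥ* Qmat n κ s) j * y j
      = ∑ j, ∑ i, x i * Qmat n κ s i j * y j :=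
        Finset.sum_congr rfl (fun j _ => by rw [vecMul_apply', Finset.sum_mul])
    _ = ∑ i, ∑ j, x i * Qmat n κ s i j * y j := Finset.sum_comm
    _ = ∑ i, ∑ j, -(y j * Qmat n κ s j i * x i) := by
        refine Finset.sum_congr rfl fun i _ => Finset.sum_congr rfl fun j _ => ?_
        rw [Qmat_skew i j]; ring
    _ = - ∑ i, (y ᵥ* Qmat n κ s) i * x i := by
        rw [← Finset.sum_neg_distrib]
        refine Finset.sum_congr rfl fun i _ => ?_
        rw [vecMul_apply', Finset.sum_mul, ← Finset.sum_neg_distrib]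

lemma sum_ind' {c : ℝ} {a : ℕ} (ha : a < n) :
    (∑ i : Fin n, (if (i:ℕ) = a then c else 0)) = c := by
  have := sum_ind (f := fun _ => (1:ℝ)) (c := c) ha
  simpa using this

lemma colsum (hnm : n = 2*m+1) (hm : 2 ≤ m) {j : ℕ} (hj : j < n) :
    ((fun _ => (1:ℝ)) ᵥ* Qmat n κ s) ⟨j, hj⟩ =
      (if j = 0 then κ-s else 0) + (if j = n-1 then s-κ else 0) := by
  have h0 : 0 < n := by omega
  have h1 : n-1 < n := by omega
  set F : Fin n → ℝ := fun j => ((fun _ => (1:ℝ)) ᵥ* Qmat n κ s) j with hF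
  have hdiff : ∀ (j' : ℕ) (hj' : j' ≤ n-2) (hja : j' < n) (hjb : j'+1 < n),
      F ⟨j'+1, hjb⟩ - F ⟨j', hja⟩ =
        (if j' = 0 then s-κ else 0) + (if j' = n-2 then s-κ else 0) := by
    intro j' hj' hja hjb
    have hp : (if j'+m+1 < n then j'+m+1 else j'+m+1-n) < n := by split <;> omega
    have hpe : (if j'+m+1 < n then j'+m+1 else j'+m+1-n) = j'+m+1 ∨
        (if j'+m+1 < n then j'+m+1 else j'+m+1-n) + n = j'+m+1 := by split <;> omega
    rw [hF, cdiff hnm hm _ hj' hp hpe hja hjb h0 h1]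
    ring
  have hmid : ∀ (j' : ℕ), 1 ≤ j' → ∀ (hj' : j' ≤ n-2) (hja : j' < n), F ⟨j', hja⟩ = F ⟨1, by omega⟩ := by
    intro j' h1j
    induction j', h1j using Nat.le_induction with
    | base => intro _ hja; rfl
    | succ k hk ih =>
      intro hk2 hja
      have hd := hdiff k (by omega) (by omega) hja
      rw [if_neg (by omega), if_neg (by omega)] at hd
      have := ih (by omega) (by omega)
      linarith [this, hd]
  have hpt : ∀ (jv : ℕ) (hjv : jv < n), F ⟨jv, hjv⟩ = F ⟨1, by omega⟩
      + (if jv = 0 then κ-s else 0) + (if jv = n-1 then s-κ else 0) := by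
    intro jv hjv
    rcases Nat.lt_trichotomy jv 1 with hc | hc | hc
    · have hjv0 : jv = 0 := by omega
      subst hjv0
      have hd := hdiff 0 (by omega) (by omega) (by omega)
      rw [if_pos rfl, if_neg (by omega)] at hd
      rw [if_pos rfl, if_neg (show ¬ (0:ℕ) = n-1 by omega)]
      have h01 : F ⟨0+1, by omega⟩ = F ⟨1, by omega⟩ := rfl
      linarith [hd, h01]
    · subst hc
      rw [if_neg (by omega : ¬ (1:ℕ) = 0), if_neg (by omega : ¬ (1:ℕ) = n-1)]
      ring
    · rcases Nat.lt_or_ge jv (n-1) with hc2 | hc2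
      · have := hmid jv (by omega) (by omega) hjv
        rw [this, if_neg (by omega : ¬ jv = 0), if_neg (by omega : ¬ jv = n-1)]
        ring
      · have hjvn : jv = n-1 := by omega
        subst hjvn
        have hd := hdiff (n-2) (by omega) (by omega) (by omega)
        rw [if_neg (by omega), if_pos rfl] at hd
        have hn2 : F ⟨n-2, by omega⟩ = F ⟨1, by omega⟩ := hmid (n-2) (by omega) (by omega) (by omega)
        rw [if_neg (by omega : ¬ (n-1:ℕ) = 0), if_pos rfl]
        have hcast : F ⟨n-2+1, by omega⟩ = F ⟨n-1, by omega⟩ := by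
          congr 1
          exact Fin.ext (by show n-2+1 = n-1; omega)
        linarith [hd, hn2, hcast]
  have hF1 : F ⟨1, by omega⟩ = 0 := by
    have hzero : ∑ j', F j' * (fun _ => (1:ℝ)) j' = - ∑ j', F j' * (fun _ => (1:ℝ)) j' :=
      skew_pair _ _
    have hsum0 : ∑ j', F j' = 0 := by
      have : ∑ j', F j' * (fun _ => (1:ℝ)) j' = ∑ j', F j' :=
        Finset.sum_congr rfl fun j' _ => by simp
      linarith [hzero, this]
    have hsum2 : ∑ j', F j' = (n:ℝ) * F ⟨1, by omega⟩ := by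
      have hc : ∀ j' : Fin n, F j' = F ⟨1, by omega⟩
          + (if (j':ℕ) = 0 then κ-s else 0) + (if (j':ℕ) = n-1 then s-κ else 0) := by
        intro j'
        obtain ⟨jv, hjv⟩ := j'
        exact hpt jv hjv
      rw [Finset.sum_congr rfl (fun j' _ => hc j')]
      rw [Finset.sum_add_distrib, Finset.sum_add_distrib, sum_ind' h0, sum_ind' h1,
        Finset.sum_const, Finset.card_univ, Fintype.card_fin]
      push_cast
      ring
    have hn0 : (n:ℝ) ≠ 0 := Nat.cast_ne_zero.mpr (by omega)
    have := hsum2.symm.trans hsum0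
    exact (mul_eq_zero.mp this).resolve_left hn0
  have h := hpt j hj
  rw [hF1] at h
  show F ⟨j, hj⟩ = _
  linarith [h]
end Block2
section Block3
variable {n m : ℕ} {κ s : ℝ}

lemma entry_diag (i : Fin n) : Qmat n κ s i i = 0 := by simp [Qmat]

lemma colsum' (hnm : n = 2*m+1) (hm : 2 ≤ m) {j : ℕ} (hj : j < n) :
    ∑ i : Fin n, (1:ℝ) * Qmat n κ s i ⟨j, hj⟩ =
      (if j = 0 then κ-s else 0) + (if j = n-1 then s-κ else 0) := by
  have := colsum (κ := κ) (s := s) hnm hm hj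
  rwa [vecMul_apply'] at this

lemma uQ (hnm : n = 2*m+1) (hm : 2 ≤ m) {j : ℕ} (hj : j < n) :
    ((fun i : Fin n => (1 - (if (i:ℕ) = 0 then (1:ℝ) else 0)
        - (if (i:ℕ) = m+1 then (1:ℝ) else 0)) / ((n:ℝ)-2)) ᵥ* Qmat n κ s) ⟨j, hj⟩ =
      ((if j = 0 then -s else 0) + (if j = m+1 then κ else 0))/((n:ℝ)-2) := by
  have h0 : (0:ℕ) < n := by omega
  have hm1 : m+1 < n := by omega
  rw [vecMul_apply']
  have expand : ∀ i : Fin n, i ∈ Finset.univ → (1 - (if (i:ℕ) = 0 then (1:ℝ) else 0)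
      - (if (i:ℕ) = m+1 then (1:ℝ) else 0)) / ((n:ℝ)-2) * Qmat n κ s i ⟨j, hj⟩
      = ((1:ℝ) * Qmat n κ s i ⟨j, hj⟩
        - (if (i:ℕ) = 0 then (1:ℝ) else 0) * Qmat n κ s i ⟨j, hj⟩
        - (if (i:ℕ) = m+1 then (1:ℝ) else 0) * Qmat n κ s i ⟨j, hj⟩) / ((n:ℝ)-2) := by
    intro i _; ring
  rw [Finset.sum_congr rfl expand, ← Finset.sum_div, Finset.sum_sub_distrib,
    Finset.sum_sub_distrib, sum_ind h0, sum_ind hm1, colsum' hnm hm hj, one_mul, one_mul]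
  rcases Nat.lt_trichotomy j (m+1) with hc | hc | hc
  · rcases Nat.eq_zero_or_pos j with hc0 | hc0
    · subst hc0
      rw [entry_diag, (Qmat_skew (κ := κ) (s := s) ⟨0, h0⟩ ⟨m+1, hm1⟩ :),
        entry_hi (a := 0) (b := m+1) hnm hm (by omega) hm1 (by omega) (by omega)]
      split_ifs <;> first | (exfalso; omega) | ring1 | contradiction
    · rw [entry_lo (a := 0) (b := j) hnm hm hc0 hj (by omega),
        (Qmat_skew (κ := κ) (s := s) ⟨j, hj⟩ ⟨m+1, hm1⟩ :),
        entry_lo (a := j) (b := m+1) hnm hm hc hm1 (by omega)]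
      split_ifs <;> first | (exfalso; omega) | ring1 | contradiction
  · subst hc
    rw [entry_hi (a := 0) (b := m+1) hnm hm (by omega) hj (by omega) (by omega), entry_diag]
    split_ifs <;> first | (exfalso; omega) | ring1 | contradiction
  · rcases Nat.lt_or_ge j (n-1) with hc2 | hc2
    · rw [entry_hi (a := 0) (b := j) hnm hm (by omega) hj (by omega) (by omega),
        entry_lo (a := m+1) (b := j) hnm hm hc hj (by omega)]
      split_ifs <;> first | (exfalso; omega) | ring1 | contradiction
    · have hjn : j = n-1 := by omega
      subst hjn
      rw [entry_0n hnm hm h0 hj, entry_lo (a := m+1) (b := n-1) hnm hm (by omega) hj (by omega)]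
      split_ifs <;> first | (exfalso; omega) | ring1 | contradiction

lemma wQ (hnm : n = 2*m+1) (hm : 2 ≤ m) {j : ℕ} (hj : j < n) :
    ((fun i : Fin n => (1 - (if (i:ℕ) = m then (1:ℝ) else 0)
        - (if (i:ℕ) = n-1 then (1:ℝ) else 0)) / ((n:ℝ)-2)) ᵥ* Qmat n κ s) ⟨j, hj⟩ =
      ((if j = m then κ else 0) + (if j = n-1 then s-2*κ else 0))/((n:ℝ)-2) := by
  have h0 : (0:ℕ) < n := by omega
  have hmn : m < n := by omega
  have h1 : n-1 < n := by omega
  rw [vecMul_apply']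
  have expand : ∀ i : Fin n, i ∈ Finset.univ → (1 - (if (i:ℕ) = m then (1:ℝ) else 0)
      - (if (i:ℕ) = n-1 then (1:ℝ) else 0)) / ((n:ℝ)-2) * Qmat n κ s i ⟨j, hj⟩
      = ((1:ℝ) * Qmat n κ s i ⟨j, hj⟩
        - (if (i:ℕ) = m then (1:ℝ) else 0) * Qmat n κ s i ⟨j, hj⟩
        - (if (i:ℕ) = n-1 then (1:ℝ) else 0) * Qmat n κ s i ⟨j, hj⟩) / ((n:ℝ)-2) := by
    intro i _; ring
  rw [Finset.sum_congr rfl expand, ← Finset.sum_div, Finset.sum_sub_distrib,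
    Finset.sum_sub_distrib, sum_ind hmn, sum_ind h1, colsum' hnm hm hj, one_mul, one_mul]
  rcases Nat.lt_trichotomy j m with hc | hc | hc
  · rcases Nat.eq_zero_or_pos j with hc0 | hc0
    · subst hc0
      rw [(Qmat_skew (κ := κ) (s := s) ⟨0, h0⟩ ⟨m, hmn⟩ :),
        entry_lo (a := 0) (b := m) hnm hm (by omega) hmn (by omega),
        (Qmat_skew (κ := κ) (s := s) ⟨0, h0⟩ ⟨n-1, h1⟩ :), entry_0n hnm hm h0 h1]
      split_ifs <;> first | (exfalso; omega) | ring1 | contradiction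
    · rw [(Qmat_skew (κ := κ) (s := s) ⟨j, hj⟩ ⟨m, hmn⟩ :),
        entry_lo (a := j) (b := m) hnm hm hc hmn (by omega),
        (Qmat_skew (κ := κ) (s := s) ⟨j, hj⟩ ⟨n-1, h1⟩ :),
        entry_hi (a := j) (b := n-1) hnm hm (by omega) h1 (by omega) (by omega)]
      split_ifs <;> first | (exfalso; omega) | ring1 | contradiction
  · rw [(Fin.ext hc : (⟨j, hj⟩ : Fin n) = ⟨m, hmn⟩), entry_diag,
      (Qmat_skew (κ := κ) (s := s) ⟨m, hmn⟩ ⟨n-1, h1⟩ :),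
      entry_lo (a := m) (b := n-1) hnm hm (by omega) h1 (by omega)]
    split_ifs <;> first | (exfalso; omega) | ring1 | contradiction
  · rcases Nat.lt_or_ge j (n-1) with hc2 | hc2
    · rw [entry_lo (a := m) (b := j) hnm hm hc hj (by omega),
        (Qmat_skew (κ := κ) (s := s) ⟨j, hj⟩ ⟨n-1, h1⟩ :),
        entry_lo (a := j) (b := n-1) hnm hm hc2 h1 (by omega)]
      split_ifs <;> first | (exfalso; omega) | ring1 | contradiction
    · have hjn : j = n-1 := by omega
      subst hjn
      rw [entry_lo (a := m) (b := n-1) hnm hm hc hj (by omega), entry_diag]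
      split_ifs <;> first | (exfalso; omega) | ring1 | contradiction

lemma piQ (hnm : n = 2*m+1) (hm : 2 ≤ m) {j : ℕ} (hj : j < n) :
    ((fun i : Fin n => s + (if (i:ℕ) = 0 then κ-s else 0) + (if (i:ℕ) = n-1 then κ-s else 0)
      + (if (i:ℕ) = m then 2*(κ-s) else 0)) ᵥ* Qmat n κ s) ⟨j, hj⟩ = 0 := by
  have h0 : (0:ℕ) < n := by omega
  have hmn : m < n := by omega
  have h1 : n-1 < n := by omega
  rw [vecMul_apply']
  have expand : ∀ i : Fin n, i ∈ Finset.univ → (s + (if (i:ℕ) = 0 then κ-s else 0)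
      + (if (i:ℕ) = n-1 then κ-s else 0) + (if (i:ℕ) = m then 2*(κ-s) else 0))
        * Qmat n κ s i ⟨j, hj⟩
      = s * ((1:ℝ) * Qmat n κ s i ⟨j, hj⟩)
        + (if (i:ℕ) = 0 then κ-s else 0) * Qmat n κ s i ⟨j, hj⟩
        + (if (i:ℕ) = n-1 then κ-s else 0) * Qmat n κ s i ⟨j, hj⟩
        + (if (i:ℕ) = m then 2*(κ-s) else 0) * Qmat n κ s i ⟨j, hj⟩ := by
    intro i _; ring
  rw [Finset.sum_congr rfl expand, Finset.sum_add_distrib, Finset.sum_add_distrib,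
    Finset.sum_add_distrib, ← Finset.mul_sum, sum_ind h0, sum_ind h1, sum_ind hmn,
    colsum' hnm hm hj]
  rcases Nat.lt_trichotomy j m with hc | hc | hc
  · rcases Nat.eq_zero_or_pos j with hc0 | hc0
    · subst hc0
      rw [entry_diag, (Qmat_skew (κ := κ) (s := s) ⟨0, h0⟩ ⟨n-1, h1⟩ :),
        entry_0n hnm hm h0 h1,
        (Qmat_skew (κ := κ) (s := s) ⟨0, h0⟩ ⟨m, hmn⟩ :),
        entry_lo (a := 0) (b := m) hnm hm (by omega) hmn (by omega)]
      split_ifs <;> first | (exfalso; omega) | ring1 | contradiction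
    · rw [entry_lo (a := 0) (b := j) hnm hm hc0 hj (by omega),
        (Qmat_skew (κ := κ) (s := s) ⟨j, hj⟩ ⟨n-1, h1⟩ :),
        entry_hi (a := j) (b := n-1) hnm hm (by omega) h1 (by omega) (by omega),
        (Qmat_skew (κ := κ) (s := s) ⟨j, hj⟩ ⟨m, hmn⟩ :),
        entry_lo (a := j) (b := m) hnm hm hc hmn (by omega)]
      split_ifs <;> first | (exfalso; omega) | ring1 | contradiction
  · rw [(Fin.ext hc : (⟨j, hj⟩ : Fin n) = ⟨m, hmn⟩),
      entry_lo (a := 0) (b := m) hnm hm (by omega) hmn (by omega), entry_diag,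
      (Qmat_skew (κ := κ) (s := s) ⟨m, hmn⟩ ⟨n-1, h1⟩ :),
      entry_lo (a := m) (b := n-1) hnm hm (by omega) h1 (by omega)]
    split_ifs <;> first | (exfalso; omega) | ring1 | contradiction
  · rcases Nat.lt_or_ge j (n-1) with hc2 | hc2
    · rw [entry_hi (a := 0) (b := j) hnm hm (by omega) hj (by omega) (by omega),
        (Qmat_skew (κ := κ) (s := s) ⟨j, hj⟩ ⟨n-1, h1⟩ :),
        entry_lo (a := j) (b := n-1) hnm hm hc2 h1 (by omega),
        entry_lo (a := m) (b := j) hnm hm hc hj (by omega)]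
      split_ifs <;> first | (exfalso; omega) | ring1 | contradiction
    · have hjn : j = n-1 := by omega
      subst hjn
      rw [entry_0n hnm hm h0 hj, entry_diag,
        entry_lo (a := m) (b := n-1) hnm hm (by omega) hj (by omega)]
      split_ifs <;> first | (exfalso; omega) | ring1 | contradiction
end Block3
section Block4
variable {n m : ℕ} {κ s : ℝ}

/-- `π` evaluated at index `a mod n`. -/
def pith (n : ℕ) (h0 : 0 < n) (π : Fin n → ℝ) (a : ℕ) : ℝ :=
  π ⟨a % n, Nat.mod_lt a h0⟩

lemma pith_eq (h0 : 0 < n) (π : Fin n → ℝ) {a : ℕ} (ha : a < n) :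
    pith n h0 π a = π ⟨a, ha⟩ := by
  unfold pith; congr 1; exact Fin.ext (Nat.mod_eq_of_lt ha)

lemma pith_congr (h0 : 0 < n) (π : Fin n → ℝ) {a b : ℕ} (hab : a % n = b % n) :
    pith n h0 π a = pith n h0 π b := by
  unfold pith; congr 1; exact Fin.ext hab

lemma sum_indicator_eq_one (h0 : 0 < n) (a : Fin n) :
    ∑ i : Fin n, (if i = a then (1:ℝ) else 0) = 1 := by
  simp

lemma dot_indicator (v : Fin n → ℝ) (a : Fin n) :
    v ⬝ᵥ (fun k => if k = a then (1:ℝ) else 0) = v a := by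
  simp [dotProduct]

lemma uVec_sum (hnm : n = 2*m+1) (hm : 2 ≤ m) :
    ∑ i : Fin n, (1 - (if (i:ℕ) = 0 then (1:ℝ) else 0)
        - (if (i:ℕ) = m+1 then (1:ℝ) else 0)) / ((n:ℝ)-2) = 1 := by
  have h0 : (0:ℕ) < n := by omega
  have hm1 : m+1 < n := by omega
  have hn2 : (2:ℝ) < (n:ℝ) := by exact_mod_cast (by omega : 2 < n)
  rw [← Finset.sum_div, Finset.sum_sub_distrib, Finset.sum_sub_distrib, Finset.sum_const,
    Finset.card_univ, Fintype.card_fin, sum_ind' h0, sum_ind' hm1]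
  rw [div_eq_one_iff_eq (by linarith)]
  push_cast
  ring

lemma wVec_sum (hnm : n = 2*m+1) (hm : 2 ≤ m) :
    ∑ i : Fin n, (1 - (if (i:ℕ) = m then (1:ℝ) else 0)
        - (if (i:ℕ) = n-1 then (1:ℝ) else 0)) / ((n:ℝ)-2) = 1 := by
  have hmn : m < n := by omega
  have h1 : n-1 < n := by omega
  have hn2 : (2:ℝ) < (n:ℝ) := by exact_mod_cast (by omega : 2 < n)
  rw [← Finset.sum_div, Finset.sum_sub_distrib, Finset.sum_sub_distrib, Finset.sum_const,
    Finset.card_univ, Fintype.card_fin, sum_ind' hmn, sum_ind' h1]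
  rw [div_eq_one_iff_eq (by linarith)]
  push_cast
  ring

lemma uVec_NE (hnm : n = 2*m+1) (hm : 2 ≤ m) (hκ : 0 < κ) (hs : s ≤ 0) :
    IsNashEq (Qmat n κ s) (fun i : Fin n => (1 - (if (i:ℕ) = 0 then (1:ℝ) else 0)
        - (if (i:ℕ) = m+1 then (1:ℝ) else 0)) / ((n:ℝ)-2)) := by
  have hn2 : (2:ℝ) < (n:ℝ) := by exact_mod_cast (by omega : 2 < n)
  refine ⟨uVec_sum hnm hm, ?_, ?_⟩
  · intro i
    apply div_nonneg _ (by linarith)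
    split_ifs <;> first | (exfalso; omega) | norm_num
  · intro y hy1 hy2
    rw [show ∀ v : Fin n → ℝ, v ⬝ᵥ y = ∑ j, v j * y j from fun v => rfl]
    apply Finset.sum_nonneg
    intro j _
    apply mul_nonneg _ (hy2 j)
    obtain ⟨jv, hjv⟩ := j
    rw [uQ hnm hm hjv]
    apply div_nonneg _ (by linarith)
    split_ifs <;> linarith

lemma wVec_NE (hnm : n = 2*m+1) (hm : 2 ≤ m) (hκ : 0 < κ) (hs : 2*κ ≤ s) :
    IsNashEq (Qmat n κ s) (fun i : Fin n => (1 - (if (i:ℕ) = m then (1:ℝ) else 0)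
        - (if (i:ℕ) = n-1 then (1:ℝ) else 0)) / ((n:ℝ)-2)) := by
  have hn2 : (2:ℝ) < (n:ℝ) := by exact_mod_cast (by omega : 2 < n)
  refine ⟨wVec_sum hnm hm, ?_, ?_⟩
  · intro i
    apply div_nonneg _ (by linarith)
    split_ifs <;> first | (exfalso; omega) | norm_num
  · intro y hy1 hy2
    rw [show ∀ v : Fin n → ℝ, v ⬝ᵥ y = ∑ j, v j * y j from fun v => rfl]
    apply Finset.sum_nonneg
    intro j _
    apply mul_nonneg _ (hy2 j)
    obtain ⟨jv, hjv⟩ := j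
    rw [wQ hnm hm hjv]
    apply div_nonneg _ (by linarith)
    split_ifs <;> linarith
end Block4

/-- If `0 < s < 2κ` then `Q(n,κ,s)` is non-redundant (every Nash
equilibrium lies in `S_n⁺⁺`); otherwise it is redundant (it has a Nash equilibrium
not in `S_n⁺⁺`). -/
theorem stmt12 (n : ℕ) (hodd : Odd n) (hn : 5 ≤ n) (κ s : ℝ) (hκ : 0 < κ) :
    ((0 < s ∧ s < 2 * κ) → ∀ π, IsNashEq (Qmat n κ s) π → ∀ i, 0 < π i) ∧
    (¬ (0 < s ∧ s < 2 * κ) → ∃ π, IsNashEq (Qmat n κ s) π ∧ ¬ ∀ i, 0 < π i) := by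
  obtain ⟨m, hm'⟩ := hodd
  have hnm : n = 2*m+1 := by omega
  have hm : 2 ≤ m := by omega
  have h0 : (0:ℕ) < n := by omega
  have h1n : n-1 < n := by omega
  have hmn : m < n := by omega
  have hm1n : m+1 < n := by omega
  have hmm1n : m-1 < n := by omega
  have hn2n : n-2 < n := by omega
  have h1n' : (1:ℕ) < n := by omega
  have hn2 : (2:ℝ) < (n:ℝ) := by exact_mod_cast (by omega : 2 < n)
  constructor
  · rintro ⟨hs, hs2⟩ π hNE
    obtain ⟨hsum, hpos, hopt⟩ := hNE
    have hv : ∀ j : Fin n, 0 ≤ (π ᵥ* Qmat n κ s) j := by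
      intro j
      have h := hopt (fun k => if k = j then 1 else 0) (by simp)
        (by intro k; split <;> norm_num)
      rwa [dot_indicator] at h
    have hvz : ∀ j : Fin n, (π ᵥ* Qmat n κ s) j = 0 := by
      have hpstpos : ∀ j : Fin n, 0 < (fun i : Fin n => s + (if (i:ℕ) = 0 then κ-s else 0)
          + (if (i:ℕ) = n-1 then κ-s else 0) + (if (i:ℕ) = m then 2*(κ-s) else 0)) j := by
        intro j; dsimp only; split_ifs <;> first | (exfalso; omega) | linarith
      have hzero : ∑ j, (π ᵥ* Qmat n κ s) j * (fun i : Fin n => s + (if (i:ℕ) = 0 then κ-s else 0)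
          + (if (i:ℕ) = n-1 then κ-s else 0) + (if (i:ℕ) = m then 2*(κ-s) else 0)) j = 0 := by
        rw [skew_pair]
        rw [Finset.sum_congr rfl (fun j _ => by
          obtain ⟨jv, hjv⟩ := j
          rw [piQ hnm hm hjv, zero_mul] :
            ∀ j ∈ Finset.univ, ((fun i : Fin n => s + (if (i:ℕ) = 0 then κ-s else 0)
            + (if (i:ℕ) = n-1 then κ-s else 0) + (if (i:ℕ) = m then 2*(κ-s) else 0))
              ᵥ* Qmat n κ s) j * π j = 0)]
        simp
      have hterm := (Finset.sum_eq_zero_iff_of_nonneg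
        (fun j _ => mul_nonneg (hv j) (hpstpos j).le)).mp hzero
      intro j
      have := hterm j (Finset.mem_univ j)
      exact (mul_eq_zero.mp this).resolve_right (ne_of_gt (hpstpos j))
    -- relations
    have hB : κ * π ⟨0,h0⟩ + κ * π ⟨1,h1n'⟩ + (-(2*κ)) * π ⟨m+1,hm1n⟩
        + (s-κ) * π ⟨n-1,h1n⟩ = 0 := by
      have hc := cdiff (κ := κ) (s := s) hnm hm π (j := 0) (p := m+1) (by omega) hm1n (Or.inl (by omega))
        h0 (by omega) h0 h1n
      rw [hvz, hvz, if_pos rfl, if_neg (by omega)] at hc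
      have e01 : π ⟨0+1, by omega⟩ = π ⟨1,h1n'⟩ := rfl
      linarith [hc, e01]
    have hC : κ * π ⟨n-2,hn2n⟩ + κ * π ⟨n-1,h1n⟩ + (-(2*κ)) * π ⟨m-1,hmm1n⟩
        + (s-κ) * π ⟨0,h0⟩ = 0 := by
      have hc := cdiff (κ := κ) (s := s) hnm hm π (j := n-2) (p := m-1) (by omega) hmm1n (Or.inr (by omega))
        hn2n (by omega) h0 h1n
      rw [hvz, hvz, if_neg (by omega), if_pos rfl] at hc
      simp only [show n-2+1 = n-1 by omega] at hc
      linarith [hc]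
    have hD : (2*κ-s) * π ⟨n-1,h1n⟩ + (2*κ-s) * π ⟨0,h0⟩ + (-(2*κ)) * π ⟨m,hmn⟩ = 0 := by
      have hc := cwrap (κ := κ) (s := s) hnm hm π h0 h1n hmn
      rw [hvz, hvz] at hc
      linarith [hc]
    have hA : ∀ (j p : ℕ), 1 ≤ j → j ≤ n-3 → ∀ (hp : p < n),
        (p = j+m+1 ∨ p+n = j+m+1) → ∀ (hja : j < n) (hjb : j+1 < n),
        κ * π ⟨j,hja⟩ + κ * π ⟨j+1,hjb⟩ + (-(2*κ)) * π ⟨p,hp⟩ = 0 := by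
      intro j p hj1 hj3 hp hpe hja hjb
      have hc := cdiff (κ := κ) (s := s) hnm hm π (j := j) (p := p) (by omega) hp hpe hja hjb h0 h1n
      rw [hvz, hvz, if_neg (by omega), if_neg (by omega)] at hc
      linarith [hc]
    have hE : κ * π ⟨m+1,hm1n⟩ = s * π ⟨0,h0⟩ := by
      have hsp := skew_pair (κ := κ) (s := s)
        (fun i : Fin n => (1 - (if (i:ℕ) = 0 then (1:ℝ) else 0)
          - (if (i:ℕ) = m+1 then (1:ℝ) else 0)) / ((n:ℝ)-2)) π
      rw [Finset.sum_congr rfl (fun j _ => by rw [hvz, zero_mul] :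
        ∀ j ∈ Finset.univ, (π ᵥ* Qmat n κ s) j * (fun i : Fin n =>
          (1 - (if (i:ℕ) = 0 then (1:ℝ) else 0)
          - (if (i:ℕ) = m+1 then (1:ℝ) else 0)) / ((n:ℝ)-2)) j = 0)] at hsp
      rw [Finset.sum_const_zero, neg_zero] at hsp
      rw [Finset.sum_congr rfl (fun j _ => by
        obtain ⟨jv, hjv⟩ := j
        rw [uQ hnm hm hjv] :
        ∀ j ∈ Finset.univ, ((fun i : Fin n => (1 - (if (i:ℕ) = 0 then (1:ℝ) else 0)
          - (if (i:ℕ) = m+1 then (1:ℝ) else 0)) / ((n:ℝ)-2)) ᵥ* Qmat n κ s) j * π j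
          = ((if (j:ℕ) = 0 then -s else 0) + (if (j:ℕ) = m+1 then κ else 0))/((n:ℝ)-2) * π j)]
        at hsp
      have hexp : ∀ j : Fin n, ((if (j:ℕ) = 0 then -s else 0)
          + (if (j:ℕ) = m+1 then κ else 0))/((n:ℝ)-2) * π j
          = ((if (j:ℕ) = 0 then -s else 0) * π j + (if (j:ℕ) = m+1 then κ else 0) * π j)
            / ((n:ℝ)-2) := fun j => by ring
      rw [Finset.sum_congr rfl (fun j _ => hexp j), ← Finset.sum_div,
        Finset.sum_add_distrib, sum_ind h0, sum_ind hm1n] at hsp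
      have := (div_eq_zero_iff.mp hsp).resolve_right (by linarith)
      linarith [this]
    have hF : κ * π ⟨m,hmn⟩ = (2*κ-s) * π ⟨n-1,h1n⟩ := by
      have hsp := skew_pair (κ := κ) (s := s)
        (fun i : Fin n => (1 - (if (i:ℕ) = m then (1:ℝ) else 0)
          - (if (i:ℕ) = n-1 then (1:ℝ) else 0)) / ((n:ℝ)-2)) π
      rw [Finset.sum_congr rfl (fun j _ => by rw [hvz, zero_mul] :
        ∀ j ∈ Finset.univ, (π ᵥ* Qmat n κ s) j * (fun i : Fin n =>
          (1 - (if (i:ℕ) = m then (1:ℝ) else 0)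
          - (if (i:ℕ) = n-1 then (1:ℝ) else 0)) / ((n:ℝ)-2)) j = 0)] at hsp
      rw [Finset.sum_const_zero, neg_zero] at hsp
      rw [Finset.sum_congr rfl (fun j _ => by
        obtain ⟨jv, hjv⟩ := j
        rw [wQ hnm hm hjv] :
        ∀ j ∈ Finset.univ, ((fun i : Fin n => (1 - (if (i:ℕ) = m then (1:ℝ) else 0)
          - (if (i:ℕ) = n-1 then (1:ℝ) else 0)) / ((n:ℝ)-2)) ᵥ* Qmat n κ s) j * π j
          = ((if (j:ℕ) = m then κ else 0) + (if (j:ℕ) = n-1 then s-2*κ else 0))/((n:ℝ)-2) * π j)]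
        at hsp
      have hexp : ∀ j : Fin n, ((if (j:ℕ) = m then κ else 0)
          + (if (j:ℕ) = n-1 then s-2*κ else 0))/((n:ℝ)-2) * π j
          = ((if (j:ℕ) = m then κ else 0) * π j + (if (j:ℕ) = n-1 then s-2*κ else 0) * π j)
            / ((n:ℝ)-2) := fun j => by ring
      rw [Finset.sum_congr rfl (fun j _ => hexp j), ← Finset.sum_div,
        Finset.sum_add_distrib, sum_ind hmn, sum_ind h1n] at hsp
      have := (div_eq_zero_iff.mp hsp).resolve_right (by linarith)
      linarith [this]
    have hG : π ⟨0,h0⟩ = π ⟨n-1,h1n⟩ := by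
      have hmul : (2*κ-s) * (π ⟨0,h0⟩ - π ⟨n-1,h1n⟩) = 0 := by linarith [hD, hF]
      have := (mul_eq_zero.mp hmul).resolve_left (by linarith)
      linarith [this]
    -- Claim 1 : π₀ = 0 leads to contradiction
    have hmain0 : π ⟨0,h0⟩ = 0 → False := by
      intro hz0
      have hzn1 : π ⟨n-1,h1n⟩ = 0 := by rw [← hG]; exact hz0
      have hzm : π ⟨m,hmn⟩ = 0 := by
        have hD' := hD
        rw [hzn1, hz0] at hD'
        have h2 : (2*κ) * π ⟨m,hmn⟩ = 0 := by linarith [hD']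
        exact (mul_eq_zero.mp h2).resolve_left (by linarith)
      have hpure : ∀ j : ℕ, 2*κ * pith n h0 π (j+m+1)
          = κ * pith n h0 π j + κ * pith n h0 π (j+1) := by
        intro j
        have hrn : j % n < n := Nat.mod_lt _ h0
        have e1 : pith n h0 π (j+m+1) = pith n h0 π (j % n+m+1) :=
          pith_congr h0 π (by rw [Nat.add_assoc, Nat.add_assoc, Nat.mod_add_mod])
        have e2 : pith n h0 π j = pith n h0 π (j % n) :=
          pith_congr h0 π (by rw [Nat.mod_mod])
        have e3 : pith n h0 π (j+1) = pith n h0 π (j % n+1) :=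
          pith_congr h0 π (by rw [Nat.mod_add_mod])
        rw [e1, e2, e3]
        set r := j % n with hr
        rcases Nat.eq_zero_or_pos r with hr0 | hr0
        · rw [hr0]
          rw [show (0:ℕ)+m+1 = m+1 by omega, pith_eq h0 π hm1n, pith_eq h0 π h0,
            show (0:ℕ)+1 = 1 by omega, pith_eq h0 π h1n']
          have hB' := hB
          rw [hzn1] at hB'
          linarith [hB']
        · rcases Nat.lt_or_ge r (n-2) with hrc | hrc
          · -- 1 ≤ r ≤ n-3 : use hA
            have hja : r < n := by omega
            have hjb : r+1 < n := by omega
            rcases Nat.lt_or_ge (r+m+1) n with hpc | hpc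
            · have hrel := hA r (r+m+1) (by omega) (by omega) hpc (Or.inl rfl) hja hjb
              rw [pith_eq h0 π hpc, pith_eq h0 π hja, pith_eq h0 π hjb]
              linarith [hrel]
            · have hp2 : r+m+1-n < n := by omega
              have hrel := hA r (r+m+1-n) (by omega) (by omega) hp2 (Or.inr (by omega)) hja hjb
              have ep : pith n h0 π (r+m+1) = π ⟨r+m+1-n, hp2⟩ := by
                rw [congrArg (pith n h0 π) (show r+m+1 = n + (r+m+1-n) by omega),
                  pith_congr h0 π (Nat.add_mod_left n (r+m+1-n)), pith_eq h0 π hp2]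
              rw [ep, pith_eq h0 π hja, pith_eq h0 π hjb]
              linarith [hrel]
          · rcases Nat.lt_or_ge r (n-1) with hrc2 | hrc2
            · -- r = n-2 : use hC
              have hre : r = n-2 := by omega
              rw [hre]
              have ep : pith n h0 π (n-2+m+1) = π ⟨m-1, hmm1n⟩ := by
                rw [congrArg (pith n h0 π) (show n-2+m+1 = n + (m-1) by omega),
                  pith_congr h0 π (Nat.add_mod_left n (m-1)), pith_eq h0 π hmm1n]
              have e2' : pith n h0 π (n-2) = π ⟨n-2, hn2n⟩ := pith_eq h0 π hn2n
              have e3' : pith n h0 π (n-2+1) = π ⟨n-1, h1n⟩ := by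
                rw [show n-2+1 = n-1 by omega, pith_eq h0 π h1n]
              rw [ep, e2', e3']
              have hC' := hC
              rw [hz0] at hC'
              linarith [hC']
            · -- r = n-1 : wrap, everything zero
              have hre : r = n-1 := by omega
              rw [hre]
              have ep : pith n h0 π (n-1+m+1) = π ⟨m, hmn⟩ := by
                rw [congrArg (pith n h0 π) (show n-1+m+1 = n + m by omega),
                  pith_congr h0 π (Nat.add_mod_left n m), pith_eq h0 π hmn]
              have e2' : pith n h0 π (n-1) = π ⟨n-1, h1n⟩ := pith_eq h0 π h1n
              have e3' : pith n h0 π (n-1+1) = π ⟨0, h0⟩ := by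
                rw [congrArg (pith n h0 π) (show n-1+1 = n by omega),
                  pith_congr h0 π (by rw [Nat.mod_self, Nat.zero_mod] :
                  n % n = 0 % n), pith_eq h0 π h0]
              rw [ep, e2', e3']
              rw [hzm, hzn1, hz0]
              ring
      have hzero : ∀ k : ℕ, pith n h0 π (k*(m+1)) = 0 := by
        intro k; induction k with
        | zero =>
          rw [congrArg (pith n h0 π) (show 0*(m+1) = 0 by ring), pith_eq h0 π h0]
          exact hz0
        | succ k ih =>
          have hrel := hpure (k*(m+1)+m)
          have eL : pith n h0 π (k*(m+1)+m+m+1) = pith n h0 π (k*(m+1)) := by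
            rw [congrArg (pith n h0 π) (show k*(m+1)+m+m+1 = k*(m+1) + n by omega)]
            exact pith_congr h0 π (Nat.add_mod_right _ _)
          rw [eL, ih] at hrel
          have hnn1 : 0 ≤ pith n h0 π (k*(m+1)+m) := hpos _
          have hnn2 : 0 ≤ pith n h0 π (k*(m+1)+m+1) := hpos _
          have hz : κ * pith n h0 π (k*(m+1)+m+1) = 0 := by nlinarith [hrel, hnn1, hnn2]
          have := (mul_eq_zero.mp hz).resolve_left (ne_of_gt hκ)
          rw [congrArg (pith n h0 π) (show (k+1)*(m+1) = k*(m+1)+m+1 by ring)]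
          exact this
      have hall : ∀ i : Fin n, π i = 0 := by
        intro i
        obtain ⟨iv, hiv⟩ := i
        have h2 := hzero (2*iv)
        rw [congrArg (pith n h0 π) (show (2*iv)*(m+1) = iv + iv*n by rw [hnm]; ring)] at h2
        rw [pith_congr h0 π (Nat.add_mul_mod_self_right iv iv n), pith_eq h0 π hiv] at h2
        exact h2
      have hone : (1:ℝ) = 0 := by
        rw [← hsum, Finset.sum_eq_zero fun i _ => hall i]
      norm_num at hone
    have hp0 : 0 < π ⟨0,h0⟩ := lt_of_le_of_ne (hpos _) (fun h => hmain0 h.symm)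
    have hpn1 : 0 < π ⟨n-1,h1n⟩ := hG ▸ hp0
    have hpm : 0 < π ⟨m,hmn⟩ := by
      have hx : 0 < (2*κ-s) * π ⟨n-1,h1n⟩ := mul_pos (by linarith) hpn1
      nlinarith [hF, hx, hpos ⟨m,hmn⟩, hκ]
    have hpm1 : 0 < π ⟨m+1,hm1n⟩ := by
      have hx : 0 < s * π ⟨0,h0⟩ := mul_pos hs hp0
      nlinarith [hE, hx, hpos ⟨m+1,hm1n⟩, hκ]
    have hpmm1 : 0 < π ⟨m-1,hmm1n⟩ := by
      rcases (hpos ⟨m-1,hmm1n⟩).lt_or_eq with h | h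
      · exact h
      · exfalso
        have hsn : 0 < s * π ⟨n-1,h1n⟩ := mul_pos hs hpn1
        have hnn : 0 ≤ κ * π ⟨n-2,hn2n⟩ := mul_nonneg hκ.le (hpos _)
        have hC' := hC
        rw [hG, ← h] at hC'
        nlinarith [hC', h, hsn, hnn]
    -- chain propagation
    have hchain : ∀ q : ℕ, pith n h0 π q = 0 → pith n h0 π (q+m) = 0 := by
      intro q hq
      have hrn : q % n < n := Nat.mod_lt _ h0
      have hqr : π ⟨q % n, hrn⟩ = 0 := by
        rw [← pith_eq h0 π hrn, pith_congr h0 π (Nat.mod_mod q n)]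
        exact hq
      set r := q % n with hr
      have hne0 : r ≠ 0 := by
        intro h; rw [show (⟨r,hrn⟩ : Fin n) = ⟨0,h0⟩ from Fin.ext h] at hqr
        exact absurd hqr (ne_of_gt hp0)
      have hnen1 : r ≠ n-1 := by
        intro h; rw [show (⟨r,hrn⟩ : Fin n) = ⟨n-1,h1n⟩ from Fin.ext h] at hqr
        exact absurd hqr (ne_of_gt hpn1)
      have hnem : r ≠ m := by
        intro h; rw [show (⟨r,hrn⟩ : Fin n) = ⟨m,hmn⟩ from Fin.ext h] at hqr
        exact absurd hqr (ne_of_gt hpm)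
      have hnem1 : r ≠ m+1 := by
        intro h; rw [show (⟨r,hrn⟩ : Fin n) = ⟨m+1,hm1n⟩ from Fin.ext h] at hqr
        exact absurd hqr (ne_of_gt hpm1)
      have hnemm1 : r ≠ m-1 := by
        intro h; rw [show (⟨r,hrn⟩ : Fin n) = ⟨m-1,hmm1n⟩ from Fin.ext h] at hqr
        exact absurd hqr (ne_of_gt hpmm1)
      have hqm : pith n h0 π (q+m) = pith n h0 π (r+m) :=
        pith_congr h0 π (by rw [Nat.mod_add_mod])
      rcases Nat.lt_or_ge r m with hcase | hcase
      · -- 1 ≤ r ≤ m-2, j := r+m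
        have hja : r+m < n := by omega
        have hjb : r+m+1 < n := by omega
        have hrel := hA (r+m) r (by omega) (by omega) hrn (Or.inr (by omega)) hja hjb
        have hnn1 : 0 ≤ π ⟨r+m,hja⟩ := hpos _
        have hnn2 : 0 ≤ π ⟨r+m+1,hjb⟩ := hpos _
        have hz1 : κ * π ⟨r+m,hja⟩ = 0 := by nlinarith [hrel, hqr, hnn1, hnn2]
        have := (mul_eq_zero.mp hz1).resolve_left (ne_of_gt hκ)
        rw [hqm, pith_eq h0 π hja]
        exact this
      · -- r ≥ m+2, j := r-m-1
        have hja : r-m-1 < n := by omega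
        have hjb : r-m-1+1 < n := by omega
        have hrel := hA (r-m-1) r (by omega) (by omega) hrn (Or.inl (by omega)) hja hjb
        have hnn1 : 0 ≤ π ⟨r-m-1,hja⟩ := hpos _
        have hnn2 : 0 ≤ π ⟨r-m-1+1,hjb⟩ := hpos _
        have hz1 : κ * π ⟨r-m-1,hja⟩ = 0 := by nlinarith [hrel, hqr, hnn1, hnn2]
        have hres := (mul_eq_zero.mp hz1).resolve_left (ne_of_gt hκ)
        have ep : pith n h0 π (r+m) = π ⟨r-m-1, hja⟩ := by
          rw [congrArg (pith n h0 π) (show r+m = n + (r-m-1) by omega),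
            pith_congr h0 π (Nat.add_mod_left n (r-m-1)), pith_eq h0 π hja]
        rw [hqm, ep]
        exact hres
    -- conclusion
    intro i
    by_contra hcon
    have hzi : π i = 0 := le_antisymm (not_lt.mp hcon) (hpos i)
    obtain ⟨iv, hiv⟩ := i
    have hind : ∀ k : ℕ, pith n h0 π (iv + k*m) = 0 := by
      intro k; induction k with
      | zero =>
        rw [congrArg (pith n h0 π) (show iv + 0*m = iv by ring), pith_eq h0 π hiv]
        exact hzi
      | succ k ih =>
        have := hchain (iv + k*m) ih
        rwa [congrArg (pith n h0 π) (show iv + k*m + m = iv + (k+1)*m by ring)] at this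
    have hfin := hind (2*iv)
    rw [congrArg (pith n h0 π) (show iv + (2*iv)*m = iv*n by rw [hnm]; ring)] at hfin
    rw [pith_congr h0 π (by rw [Nat.mul_mod_left, Nat.zero_mod] : (iv*n) % n = 0 % n),
      pith_eq h0 π h0] at hfin
    exact absurd hfin (ne_of_gt hp0)
  · -- redundant part
    intro hns
    rcases le_or_gt s 0 with hsle | hsgt
    · refine ⟨_, uVec_NE hnm hm hκ hsle, ?_⟩
      intro hall
      have h := hall ⟨0, h0⟩
      have hz : (1 - (if ((⟨0,h0⟩ : Fin n):ℕ) = 0 then (1:ℝ) else 0)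
          - (if ((⟨0,h0⟩ : Fin n):ℕ) = m+1 then (1:ℝ) else 0)) / ((n:ℝ)-2) = 0 := by
        rw [if_pos rfl, if_neg (by show ¬(0:ℕ) = m+1; omega)]
        norm_num
      rw [hz] at h
      exact lt_irrefl _ h
    · have hs2 : 2*κ ≤ s := by
        by_contra hlt
        push_neg at hlt
        exact hns ⟨hsgt, hlt⟩
      refine ⟨_, wVec_NE hnm hm hκ hs2, ?_⟩
      intro hall
      have h := hall ⟨m, hmn⟩
      have hz : (1 - (if ((⟨m,hmn⟩ : Fin n):ℕ) = m then (1:ℝ) else 0)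
          - (if ((⟨m,hmn⟩ : Fin n):ℕ) = n-1 then (1:ℝ) else 0)) / ((n:ℝ)-2) = 0 := by
        rw [if_pos rfl, if_neg (by show ¬m = n-1; omega)]
        norm_num
      rw [hz] at h
      exact lt_irrefl _ h
end

section
/- Let a, b, c ∈ ℝ and let A be the 3×3 skew-symmetric matrix with rows (0, a, −b), (−a, 0, c), (b, −c, 0). Then the vector (c, b, a) satisfies (c, b, a) A = (0, 0, 0); and if (a,b,c) ≠ (0,0,0), then A is non-redundant (every Nash equilibrium of A lies in S_3⁺⁺) if and only if a, b, c all have the same strict sign, i.e., (a > 0 ∧ b > 0 ∧ c > 0) or (a < 0 ∧ b < 0 ∧ c < 0). -/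
open Matrix

lemma nashIff {n : ℕ} (A : Matrix (Fin n) (Fin n) ℝ) (π : Fin n → ℝ) :
    IsNashEq A π ↔ (∑ i, π i = 1) ∧ (∀ i, 0 ≤ π i) ∧ ∀ j, 0 ≤ (π ᵥ* A) j := by
  unfold IsNashEq
  refine and_congr_right fun _ => and_congr_right fun _ => ⟨fun h j => ?_, fun h y hy hy' => ?_⟩
  · have := h (Pi.single j 1) (by simp) (fun i => by
      by_cases hi : i = j <;> simp [Pi.single_apply, hi])
    simpa using this
  · exact Finset.sum_nonneg fun i _ => mul_nonneg (h i) (hy' i)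

lemma vmcalc (a b c : ℝ) (v : Fin 3 → ℝ) :
    v ᵥ* !![0, a, -b; -a, 0, c; b, -c, 0] =
      ![-a * v 1 + b * v 2, a * v 0 - c * v 2, -b * v 0 + c * v 1] := by
  funext j
  fin_cases j <;>
    simp [Matrix.vecMul, dotProduct, Fin.sum_univ_three] <;> ring

/-- For the 3×3 skew-symmetric matrix with rows `(0,a,−b)`, `(−a,0,c)`,
`(b,−c,0)`, the vector `(c,b,a)` satisfies `(c,b,a)A = 0`; and if `(a,b,c) ≠ (0,0,0)`,
then `A` is non-redundant iff `a, b, c` all have the same strict sign. -/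
theorem stmt17 (a b c : ℝ)
    (A : Matrix (Fin 3) (Fin 3) ℝ)
    (hA : A = !![0, a, -b; -a, 0, c; b, -c, 0]) :
    (![c, b, a]) ᵥ* A = 0 ∧
      (¬ (a = 0 ∧ b = 0 ∧ c = 0) →
        ((∀ π, IsNashEq A π → ∀ i, 0 < π i) ↔
          ((0 < a ∧ 0 < b ∧ 0 < c) ∨ (a < 0 ∧ b < 0 ∧ c < 0)))) := by
  subst hA
  constructor
  · rw [vmcalc]
    funext j
    fin_cases j <;> simp <;> ring
  · intro _hne
    constructor
    · -- if all Nash eqs are interior, then same strict sign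
      intro hall
      by_contra hs
      push_neg at hs
      -- helper to refute via a vertex Nash equilibrium
      have vert : ∀ v : Fin 3 → ℝ, (∑ i, v i = 1) → (∀ i, 0 ≤ v i) →
          (∀ j, 0 ≤ (v ᵥ* !![0, a, -b; -a, 0, c; b, -c, 0]) j) →
          ∀ i, 0 < v i := fun v h1 h2 h3 =>
        hall v ((nashIff _ v).mpr ⟨h1, h2, h3⟩)
      rcases le_or_gt a 0 with ha | ha
      · rcases le_or_gt 0 c with hc | hc
        · -- vertex e1 = (0,1,0): entries (−a, 0, c) ≥ 0
          have := vert ![0, 1, 0] (by simp [Fin.sum_univ_three])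
            (fun i => by fin_cases i <;> norm_num)
            (fun j => by rw [vmcalc]; fin_cases j <;> simp <;> linarith) 0
          simp at this
        · rcases le_or_gt 0 b with hb | hb
          · -- vertex e2 = (0,0,1): entries (b, −c, 0) ≥ 0
            have := vert ![0, 0, 1] (by simp [Fin.sum_univ_three])
              (fun i => by fin_cases i <;> norm_num)
              (fun j => by rw [vmcalc]; fin_cases j <;> simp <;> linarith) 0
            simp at this
          · rcases le_or_gt 0 a with ha' | ha'
            · -- a = 0, use vertex e0 = (1,0,0): entries (0, a, −b) ≥ 0
              have := vert ![1, 0, 0] (by simp [Fin.sum_univ_three])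
                (fun i => by fin_cases i <;> norm_num)
                (fun j => by rw [vmcalc]; fin_cases j <;> simp <;> linarith) 1
              simp at this
            · linarith [hs.2 ha' hb]
      · -- 0 < a
        rcases le_or_gt b 0 with hb | hb
        · -- vertex e0
          have := vert ![1, 0, 0] (by simp [Fin.sum_univ_three])
            (fun i => by fin_cases i <;> norm_num)
            (fun j => by rw [vmcalc]; fin_cases j <;> simp <;> linarith) 1
          simp at this
        · rcases le_or_gt c 0 with hc | hc
          · -- vertex e2
            have := vert ![0, 0, 1] (by simp [Fin.sum_univ_three])
              (fun i => by fin_cases i <;> norm_num)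
              (fun j => by rw [vmcalc]; fin_cases j <;> simp <;> linarith) 0
            simp at this
          · linarith [hs.1 ha hb]
    · -- same strict sign → every Nash eq interior
      rintro hsign π hπ i
      rw [nashIff] at hπ
      obtain ⟨hsum, hnn, hent⟩ := hπ
      rw [vmcalc] at hent
      have e0 := hent 0
      have e1 := hent 1
      have e2 := hent 2
      simp only [Matrix.cons_val_zero, Matrix.cons_val_one, Matrix.head_cons,
        Matrix.cons_val_two, Matrix.tail_cons] at e0 e1 e2
      rw [Fin.sum_univ_three] at hsum
      have n0 := hnn 0; have n1 := hnn 1; have n2 := hnn 2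
      rcases hsign with ⟨ha, hb, hc⟩ | ⟨ha, hb, hc⟩
      · have h0 : 0 < π 0 := by
          rcases n0.lt_or_eq with h | h
          · exact h
          · exfalso
            have hπ2 : π 2 = 0 := le_antisymm (by nlinarith) n2
            have hπ1 : π 1 = 1 := by linarith
            nlinarith
        have h1 : 0 < π 1 := by
          rcases n1.lt_or_eq with h | h
          · exact h
          · exfalso; nlinarith
        have h2 : 0 < π 2 := by
          rcases n2.lt_or_eq with h | h
          · exact h
          · exfalso; nlinarith
        fin_cases i <;> assumption
      · have h1 : 0 < π 1 := by
          rcases n1.lt_or_eq with h | h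
          · exact h
          · exfalso
            have hπ2 : π 2 = 0 := le_antisymm (by nlinarith) n2
            have hπ0 : π 0 = 1 := by linarith
            nlinarith
        have h0 : 0 < π 0 := by
          rcases n0.lt_or_eq with h | h
          · exact h
          · exfalso; nlinarith
        have h2 : 0 < π 2 := by
          rcases n2.lt_or_eq with h | h
          · exact h
          · exfalso; nlinarith
        fin_cases i <;> assumption
end
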